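/- arXiv:1505.04300 — 9 statements merged into one kernel-verified Lean document; each statement's English description precedes it below -/
import Mathlib

section
/- If G is a nontrivial k-dense graph and v is a vertex of G with degree exactly k−1, then the closed neighborhood N[v] induces a complete subgraph of G on k vertices (i.e., v lies in a clique of size k). -/
/-- A graph `G` is `k`-dense if every two adjacent vertices have at least `k - 2`
common neighbors. -/
def kDense {V : Type*} (G : SimpleGraph V) (k : ℕ) : Prop :=
  ∀ u v : V, G.Adj u v → k - 2 ≤ (G.neighborSet u ∩ G.neighborSet v).ncard

/-- A graph is `k*`-dense if it is `k`-dense but not `(k+1)`-dense. -/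
def kStarDense {V : Type*} (G : SimpleGraph V) (k : ℕ) : Prop :=
  kDense G k ∧ ¬ kDense G (k + 1)

/-!
If `deg v = k - 1`, each neighbour `a` of `v` has at most `k - 2` common neighbours with `v`,
namely the other neighbours of `v`; `k`-density forces all of them to be common neighbours,
so `N(v)` is a clique and `N[v]` is a clique on `k` vertices.
-/

namespace SimpleGraph

variable {V : Type*} {G : SimpleGraph V} {v a b : V}

theorem commonNeighbors_eq_neighborSet_sdiff_of_ncard_le (hfin : (G.neighborSet v).Finite)
    (ha : G.Adj v a) (hcard : (G.neighborSet v).ncard - 1 ≤ (G.commonNeighbors v a).ncard) :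
    G.commonNeighbors v a = G.neighborSet v \ {a} := by
  have hsub : G.commonNeighbors v a ⊆ G.neighborSet v \ {a} :=
    Set.subset_sdiff_singleton (G.commonNeighbors_subset_neighborSet_left v a)
      (G.notMem_commonNeighbors_right v a)
  refine Set.eq_of_subset_of_ncard_le hsub ?_ hfin.sdiff
  rwa [Set.ncard_sdiff_singleton_of_mem (G.mem_neighborSet v a |>.mpr ha)]

theorem adj_of_ncard_neighborSet_le (hfin : (G.neighborSet v).Finite) (ha : G.Adj v a)
    (hb : G.Adj v b) (hab : a ≠ b)
    (hcard : (G.neighborSet v).ncard - 1 ≤ (G.commonNeighbors v a).ncard) : G.Adj a b := by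
  have hb' : b ∈ G.commonNeighbors v a := by
    rw [commonNeighbors_eq_neighborSet_sdiff_of_ncard_le hfin ha hcard]
    exact ⟨hb, hab.symm⟩
  exact hb'.2

theorem isClique_insert_neighborSet (hfin : (G.neighborSet v).Finite)
    (hcard : ∀ a, G.Adj v a → (G.neighborSet v).ncard - 1 ≤ (G.commonNeighbors v a).ncard) :
    G.IsClique (insert v (G.neighborSet v)) :=
  isClique_insert.mpr
    ⟨fun _ ha _ hb hab => adj_of_ncard_neighborSet_le hfin ha hb hab (hcard _ ha),
      fun _ hb _ => hb⟩

theorem ncard_insert_neighborSet (hfin : (G.neighborSet v).Finite) :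
    (insert v (G.neighborSet v)).ncard = (G.neighborSet v).ncard + 1 :=
  Set.ncard_insert_of_notMem G.notMem_neighborSet_self hfin

end SimpleGraph

theorem kDense.isClique_insert_neighborSet {V : Type*} {G : SimpleGraph V} {k : ℕ} {v : V}
    (hdense : kDense G k) (hdeg : (G.neighborSet v).ncard = k - 1)
    (hfin : (G.neighborSet v).Finite) : G.IsClique (insert v (G.neighborSet v)) :=
  G.isClique_insert_neighborSet hfin fun a ha => by
    have := hdense v a ha
    rw [G.commonNeighbors_eq]
    omega

theorem clique_of_min_degree_general {V : Type*} (G : SimpleGraph V) (k : ℕ) (hk : 2 ≤ k)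
    (hdense : kDense G k)
    (v : V) (hdeg : (G.neighborSet v).ncard = k - 1) :
    (∀ a ∈ insert v (G.neighborSet v), ∀ b ∈ insert v (G.neighborSet v), a ≠ b → G.Adj a b) ∧
      (insert v (G.neighborSet v)).ncard = k := by
  -- `ncard` of an infinite set is `0`, so `deg v = k - 1 ≥ 1` forces `N(v)` to be finite.
  have hfin : (G.neighborSet v).Finite := Set.finite_of_ncard_pos (by omega)
  refine ⟨hdense.isClique_insert_neighborSet hdeg hfin, ?_⟩
  rw [G.ncard_insert_neighborSet hfin, hdeg]
  omega

/-- In a nontrivial k-dense graph, a vertex of degree exactly k−1 has its closed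
neighborhood inducing a complete subgraph on k vertices. -/
theorem clique_of_min_degree {V : Type*} [Fintype V] (G : SimpleGraph V) (k : ℕ) (hk : 2 ≤ k)
    (hniso : ∀ v : V, ∃ u : V, G.Adj v u) (hdense : kDense G k)
    (v : V) (hdeg : (G.neighborSet v).ncard = k - 1) :
    (∀ a ∈ insert v (G.neighborSet v), ∀ b ∈ insert v (G.neighborSet v), a ≠ b → G.Adj a b) ∧
      (insert v (G.neighborSet v)).ncard = k :=
  clique_of_min_degree_general G k hk hdense v hdeg
end

section
/- If G is a connected k-dense graph with k ≥ 2, then G is (k−1)-edge-connected: for any set S of at most k−2 edges, G − S is connected. -/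
/-- A connected k-dense graph is (k−1)-edge-connected: deleting any set of at most
k − 2 edges leaves it connected. -/
theorem edge_connectivity_of_kDense {V : Type*} [Fintype V] (G : SimpleGraph V) (k : ℕ)
    (hk : 2 ≤ k) (hconn : G.Connected) (hdense : kDense G k) :
    ∀ s : Finset (Sym2 V), s.card ≤ k - 2 → (G.deleteEdges ↑s).Connected := by
  classical
  intro s hs
  set H := G.deleteEdges (↑s : Set (Sym2 V)) with hH
  have key : ∀ u v : V, G.Adj u v → H.Reachable u v := by
    intro u v huv
    by_cases hmem : s(u, v) ∈ s
    · have h1 : 1 ≤ s.card := Finset.card_pos.mpr ⟨_, hmem⟩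
      have hk3 : 3 ≤ k := by omega
      set W : Set V := G.neighborSet u ∩ G.neighborSet v with hWdef
      have hW : k - 2 ≤ W.ncard := hdense u v huv
      set Bad : Set V := {w | w ∈ W ∧ (s(u, w) ∈ s ∨ s(w, v) ∈ s)} with hBaddef
      have hBadW : Bad ⊆ W := fun w hw => hw.1
      have hBadcard : Bad.ncard ≤ (s.erase s(u, v)).card := by
        rw [← Set.ncard_coe_finset]
        apply Set.ncard_le_ncard_of_injOn (fun w => if s(u, w) ∈ s then s(u, w) else s(w, v))
        · intro w hw
          obtain ⟨⟨hwu, hwv⟩, hbad⟩ := hw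
          rw [SimpleGraph.mem_neighborSet] at hwu hwv
          beta_reduce
          by_cases h : s(u, w) ∈ s
          · rw [if_pos h, Finset.mem_coe, Finset.mem_erase]
            refine ⟨?_, h⟩
            intro heq
            rw [Sym2.eq_iff] at heq
            rcases heq with ⟨_, h2⟩ | ⟨h1, _⟩
            · exact hwv.ne h2.symm
            · exact huv.ne h1
          · have h2 : s(w, v) ∈ s := hbad.resolve_left h
            rw [if_neg h, Finset.mem_coe, Finset.mem_erase]
            refine ⟨?_, h2⟩
            intro heq
            rw [Sym2.eq_iff] at heq
            rcases heq with ⟨h1, _⟩ | ⟨_, h2'⟩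
            · exact hwu.ne h1.symm
            · exact huv.ne h2'.symm
        · intro w hw w' hw' heq
          obtain ⟨⟨hwu, hwv⟩, _⟩ := hw
          obtain ⟨⟨hwu', hwv'⟩, _⟩ := hw'
          rw [SimpleGraph.mem_neighborSet] at hwu hwv hwu' hwv'
          beta_reduce at heq
          by_cases h : s(u, w) ∈ s <;> by_cases h' : s(u, w') ∈ s
          · rw [if_pos h, if_pos h', Sym2.eq_iff] at heq
            rcases heq with ⟨_, h2⟩ | ⟨h1, _⟩
            · exact h2
            · exact (hwu'.ne h1).elim
          · rw [if_pos h, if_neg h', Sym2.eq_iff] at heq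
            rcases heq with ⟨h1, h2⟩ | ⟨h1, _⟩
            · exact (hwv.ne h2.symm).elim
            · exact (huv.ne h1).elim
          · rw [if_neg h, if_pos h', Sym2.eq_iff] at heq
            rcases heq with ⟨_, h2⟩ | ⟨h1, _⟩
            · exact (hwv'.ne h2).elim
            · exact h1
          · rw [if_neg h, if_neg h', Sym2.eq_iff] at heq
            rcases heq with ⟨h1, _⟩ | ⟨h1, _⟩
            · exact h1
            · exact (hwv.ne h1.symm).elim
      have herase : (s.erase s(u, v)).card = s.card - 1 := Finset.card_erase_of_mem hmem
      have hlt : Bad.ncard < W.ncard := by omega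
      have hex : ∃ w, w ∈ W ∧ w ∉ Bad := by
        by_contra hc
        push_neg at hc
        have : W ⊆ Bad := fun w hw => hc w hw
        have := Set.ncard_le_ncard this (Set.toFinite _)
        omega
      obtain ⟨w, hwW, hwBad⟩ := hex
      obtain ⟨hwu, hwv⟩ := hwW
      rw [SimpleGraph.mem_neighborSet] at hwu hwv
      have hnot : s(u, w) ∉ s ∧ s(w, v) ∉ s := by
        by_contra hc
        exact hwBad ⟨⟨hwu, hwv⟩, by tauto⟩
      have h1 : H.Adj u w := by
        rw [hH, SimpleGraph.deleteEdges_adj]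
        exact ⟨hwu, by simpa using hnot.1⟩
      have h2 : H.Adj w v := by
        rw [hH, SimpleGraph.deleteEdges_adj]
        exact ⟨hwv.symm, by simpa using hnot.2⟩
      exact h1.reachable.trans h2.reachable
    · have : H.Adj u v := by
        rw [hH, SimpleGraph.deleteEdges_adj]
        exact ⟨huv, by simpa using hmem⟩
      exact this.reachable
  have pre : H.Preconnected := by
    intro a b
    obtain ⟨p⟩ := hconn.preconnected a b
    induction p with
    | nil => exact SimpleGraph.Reachable.refl _
    | cons h _ ih => exact (key _ _ h).trans ih
  haveI := hconn.nonempty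
  exact ⟨pre⟩
end

section
/- For n ≥ 3, a graph G on n vertices is (n−1)*-dense if and only if G is isomorphic to K_n minus one edge. -/
private lemma aux_disj {V : Type*} [Fintype V] (s t : Set V) (h : Disjoint s t) :
    s.ncard + t.ncard ≤ Fintype.card V := by
  rw [← Set.ncard_union_eq h s.toFinite t.toFinite]
  calc (s ∪ t).ncard ≤ (Set.univ : Set V).ncard :=
        Set.ncard_le_ncard (Set.subset_univ _) Set.finite_univ
    _ = Fintype.card V := by rw [Set.ncard_univ, Nat.card_eq_fintype_card]

private lemma aux_four {V : Type*} [Fintype V] {G : SimpleGraph V} {n : ℕ}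
    (hn : Fintype.card V = n)
    {a b c d : V} (hdense : n - 3 ≤ (G.neighborSet a ∩ G.neighborSet b).ncard)
    (hc : c ∉ G.neighborSet a ∩ G.neighborSet b)
    (hd : d ∉ G.neighborSet a ∩ G.neighborSet b)
    (hab : a ≠ b) (hac : a ≠ c) (had : a ≠ d)
    (hbc : b ≠ c) (hbd : b ≠ d) (hcd : c ≠ d) : False := by
  have hcard : ({a,b,c,d} : Set V).ncard = 4 := by
    rw [Set.ncard_insert_of_notMem (by simp [hab, hac, had]),
      Set.ncard_insert_of_notMem (by simp [hbc, hbd]),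
      Set.ncard_insert_of_notMem (by simp [hcd]), Set.ncard_singleton]
  have hdisj : Disjoint ({a,b,c,d} : Set V) (G.neighborSet a ∩ G.neighborSet b) := by
    rw [Set.disjoint_left]
    rintro x (rfl | rfl | rfl | rfl)
    · rintro ⟨hx, -⟩; exact G.irrefl hx
    · rintro ⟨-, hx⟩; exact G.irrefl hx
    · exact hc
    · exact hd
  have h4 : ({a,b,c,d} : Set V).ncard ≤ Fintype.card V :=
    Set.ncard_le_ncard (Set.subset_univ _) Set.finite_univ |>.trans
      (by rw [Set.ncard_univ, Nat.card_eq_fintype_card])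
  have := aux_disj _ _ hdisj
  omega

/-- For n ≥ 3, a graph on n vertices with no isolated vertices is (n−1)*-dense iff
it is the complete graph minus one edge. -/
theorem nSub1StarDense_iff {V : Type*} [Fintype V] (G : SimpleGraph V) (n : ℕ)
    (hn : Fintype.card V = n) (hn3 : 3 ≤ n) (hniso : ∀ v : V, ∃ u : V, G.Adj v u) :
    kStarDense G (n - 1) ↔
      ∃ u v : V, u ≠ v ∧ G = (⊤ : SimpleGraph V).deleteEdges {s(u, v)} := by
  constructor
  · rintro ⟨h1, h2⟩
    have h1' : ∀ u v : V, G.Adj u v → n - 3 ≤ (G.neighborSet u ∩ G.neighborSet v).ncard := by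
      intro u v huv
      have := h1 u v huv
      omega
    -- Step A : no vertex has two distinct non-neighbors
    have stepA : ∀ u v w : V, v ≠ w → u ≠ v → u ≠ w → ¬ G.Adj u v → ¬ G.Adj u w → False := by
      intro u v w hvw huv huw hnv hnw
      obtain ⟨x, hux⟩ := hniso u
      have hxv : x ≠ v := fun h => hnv (h ▸ hux)
      have hxw : x ≠ w := fun h => hnw (h ▸ hux)
      exact aux_four hn (h1' u x hux)
        (fun h => hnv h.1) (fun h => hnw h.1)
        hux.ne huv huw hxv hxw hvw
    -- Step B : find a non-adjacent pair
    have h2' : ∃ a b : V, G.Adj a b ∧ (G.neighborSet a ∩ G.neighborSet b).ncard < n - 1 + 1 - 2 := by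
      unfold kDense at h2
      push_neg at h2
      exact h2
    obtain ⟨a, b, hab, hcount⟩ := h2'
    have hcount' : (G.neighborSet a ∩ G.neighborSet b).ncard < n - 2 := by omega
    have hBexists : ∃ c : V, c ≠ a ∧ c ≠ b ∧ c ∉ G.neighborSet a ∩ G.neighborSet b := by
      by_contra hcon
      push_neg at hcon
      have hsub : (Set.univ \ {a, b} : Set V) ⊆ G.neighborSet a ∩ G.neighborSet b := by
        intro c hc
        simp only [Set.mem_diff, Set.mem_univ, Set.mem_insert_iff, Set.mem_singleton_iff,
          true_and] at hc
        push_neg at hc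
        exact hcon c hc.1 hc.2
      have hd : (Set.univ \ {a, b} : Set V).ncard = n - 2 := by
        rw [Set.ncard_diff (Set.subset_univ _), Set.ncard_univ, Nat.card_eq_fintype_card, hn,
          Set.ncard_pair hab.ne]
      have := Set.ncard_le_ncard hsub (Set.toFinite _)
      omega
    obtain ⟨c, hca, hcb, hc⟩ := hBexists
    have hnonadj : ∃ u v : V, u ≠ v ∧ ¬ G.Adj u v := by
      simp only [Set.mem_inter_iff, SimpleGraph.mem_neighborSet, not_and_or] at hc
      rcases hc with hc | hc
      · exact ⟨a, c, hca.symm, hc⟩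
      · exact ⟨b, c, hcb.symm, hc⟩
    obtain ⟨u, v, huv, hnadj⟩ := hnonadj
    refine ⟨u, v, huv, ?_⟩
    ext x y
    simp only [SimpleGraph.deleteEdges_adj, SimpleGraph.top_adj, Set.mem_singleton_iff,
      Sym2.eq_iff]
    constructor
    · intro hxy
      refine ⟨hxy.ne, ?_⟩
      rintro (⟨rfl, rfl⟩ | ⟨rfl, rfl⟩)
      · exact hnadj hxy
      · exact hnadj hxy.symm
    · rintro ⟨hne, hpair⟩
      push_neg at hpair
      by_contra hnxy
      by_cases hxu : x = u
      · subst hxu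
        have hyv : y ≠ v := by
          intro h; subst h; exact (hpair.1 rfl) rfl
        exact stepA x v y hyv.symm huv hne hnadj hnxy
      by_cases hxv : x = v
      · subst hxv
        have hyu : y ≠ u := by
          intro h; subst h; exact (hpair.2 rfl) rfl
        exact stepA x u y hyu.symm (Ne.symm huv) hne (fun h => hnadj h.symm) hnxy
      by_cases hyu : y = u
      · subst hyu
        exact stepA y v x (Ne.symm hxv) huv (Ne.symm hne) hnadj (fun h => hnxy h.symm)
      by_cases hyv : y = v
      · subst hyv
        exact stepA y u x (Ne.symm hxu) (Ne.symm huv) (Ne.symm hne)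
          (fun h => hnadj h.symm) (fun h => hnxy h.symm)
      -- all of x, y, u, v distinct
      · have hxadju : G.Adj x u := by
          by_contra hh
          exact stepA x y u hyu hne hxu hnxy hh
        exact aux_four hn (h1' x u hxadju)
          (fun h => hnxy h.1) (fun h => hnadj h.2)
          hxu hne hxv (Ne.symm hyu) huv (fun h => hyv h)
  · rintro ⟨u, v, huv, rfl⟩
    set G' := (⊤ : SimpleGraph V).deleteEdges {s(u, v)} with hG'
    have hadj : ∀ x y : V, G'.Adj x y ↔ x ≠ y ∧ ¬(x = u ∧ y = v) ∧ ¬(x = v ∧ y = u) := by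
      intro x y
      simp [hG', SimpleGraph.deleteEdges_adj, Sym2.eq_iff]
    have key : ∀ x y z : V,
        (Set.univ \ {x, y, z} : Set V) ⊆ G'.neighborSet x ∩ G'.neighborSet y →
        n - 1 - 2 ≤ (G'.neighborSet x ∩ G'.neighborSet y).ncard := by
      intro x y z hsub
      have h1 := Set.ncard_le_ncard hsub (Set.toFinite _)
      have h2 : ({x, y, z} : Set V).ncard ≤ 3 := by
        calc ({x, y, z} : Set V).ncard ≤ ({y, z} : Set V).ncard + 1 := Set.ncard_insert_le _ _
          _ ≤ (({z} : Set V).ncard + 1) + 1 := by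
              exact Nat.add_le_add_right (Set.ncard_insert_le _ _) 1
          _ = 3 := by rw [Set.ncard_singleton]
      have h3 : (Set.univ \ {x, y, z} : Set V).ncard
          = n - ({x, y, z} : Set V).ncard := by
        rw [Set.ncard_diff (Set.subset_univ _), Set.ncard_univ, Nat.card_eq_fintype_card, hn]
      omega
    constructor
    · intro x y hxy
      rw [hadj] at hxy
      obtain ⟨hne, hp1, hp2⟩ := hxy
      by_cases hxu : x = u
      · subst hxu
        refine key x y v ?_
        intro w hw
        simp only [Set.mem_diff, Set.mem_univ, Set.mem_insert_iff, Set.mem_singleton_iff,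
          true_and] at hw
        push_neg at hw
        constructor <;> rw [SimpleGraph.mem_neighborSet, hadj] <;>
          refine ⟨?_, ?_, ?_⟩ <;> try tauto
      by_cases hxv : x = v
      · subst hxv
        refine key x y u ?_
        intro w hw
        simp only [Set.mem_diff, Set.mem_univ, Set.mem_insert_iff, Set.mem_singleton_iff,
          true_and] at hw
        push_neg at hw
        constructor <;> rw [SimpleGraph.mem_neighborSet, hadj] <;>
          refine ⟨?_, ?_, ?_⟩ <;> try tauto
      by_cases hyu : y = u
      · subst hyu
        refine key x y v ?_
        intro w hw
        simp only [Set.mem_diff, Set.mem_univ, Set.mem_insert_iff, Set.mem_singleton_iff,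
          true_and] at hw
        push_neg at hw
        constructor <;> rw [SimpleGraph.mem_neighborSet, hadj] <;>
          refine ⟨?_, ?_, ?_⟩ <;> try tauto
      by_cases hyv : y = v
      · subst hyv
        refine key x y u ?_
        intro w hw
        simp only [Set.mem_diff, Set.mem_univ, Set.mem_insert_iff, Set.mem_singleton_iff,
          true_and] at hw
        push_neg at hw
        constructor <;> rw [SimpleGraph.mem_neighborSet, hadj] <;>
          refine ⟨?_, ?_, ?_⟩ <;> try tauto
      · refine key x y x ?_
        intro w hw
        simp only [Set.mem_diff, Set.mem_univ, Set.mem_insert_iff, Set.mem_singleton_iff,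
          true_and] at hw
        push_neg at hw
        constructor <;> rw [SimpleGraph.mem_neighborSet, hadj] <;>
          refine ⟨?_, ?_, ?_⟩ <;> try tauto
    · -- not n-dense: pick w ∉ {u, v}
      intro hdense
      have hw : ∃ w : V, w ≠ u ∧ w ≠ v := by
        by_contra hcon
        push_neg at hcon
        have hsub : (Set.univ : Set V) ⊆ {u, v} := by
          intro w _
          simp only [Set.mem_insert_iff, Set.mem_singleton_iff]
          by_cases h : w = u
          · exact Or.inl h
          · exact Or.inr (hcon w h)
        have hle := Set.ncard_le_ncard hsub (Set.toFinite _)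
        have h2 : ({u, v} : Set V).ncard ≤ 2 :=
          (Set.ncard_insert_le _ _).trans (by rw [Set.ncard_singleton])
        rw [Set.ncard_univ, Nat.card_eq_fintype_card, hn] at hle
        omega
      obtain ⟨w, hwu, hwv⟩ := hw
      have huw : G'.Adj u w := by
        rw [hadj]
        refine ⟨Ne.symm hwu, ?_, ?_⟩
        · rintro ⟨-, rfl⟩; exact hwv rfl
        · rintro ⟨rfl, -⟩; exact huv rfl
      have := hdense u w huw
      -- common neighbors of u, w avoid u, w, v
      have hsub : G'.neighborSet u ∩ G'.neighborSet w ⊆ Set.univ \ {u, w, v} := by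
        rintro z ⟨hz1, hz2⟩
        rw [SimpleGraph.mem_neighborSet, hadj] at hz1 hz2
        simp only [Set.mem_diff, Set.mem_univ, Set.mem_insert_iff, Set.mem_singleton_iff,
          true_and]
        push_neg
        refine ⟨Ne.symm hz1.1, Ne.symm hz2.1, ?_⟩
        rintro rfl
        exact hz1.2.1 ⟨rfl, rfl⟩
      have hle := Set.ncard_le_ncard hsub (Set.toFinite _)
      have hcard3 : ({u, w, v} : Set V).ncard = 3 := by
        rw [Set.ncard_insert_of_notMem (by simp [Ne.symm hwu, huv]),
          Set.ncard_insert_of_notMem (by simp [hwv]), Set.ncard_singleton]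
      have hdiffcard : (Set.univ \ {u, w, v} : Set V).ncard = n - 3 := by
        rw [Set.ncard_diff (Set.subset_univ _), Set.ncard_univ, Nat.card_eq_fintype_card, hn,
          hcard3]
      omega
end

section
/- For every integer n ≥ 3, the minimum number of edges in a connected 3*-dense graph on n vertices is ⌈3(n−1)/2⌉. -/
/-!
Lower bound: in a connected graph in which every edge lies in a triangle, grow a vertex set
`S` from a single vertex while keeping `3 (|S| - 1) ≤ 2 e(S)`, where `e(S)` counts the edges
inside `S`. An edge `uv` leaving `S` lies in a triangle `uvw`: if `w ∈ S`, adding `v` gains the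
two edges `uv`, `vw`; otherwise adding `v` and `w` gains the three edges `uv`, `uw`, `vw`.

Upper bound: in the windmill on `Fin n`, with hub `0` joined to every vertex and triangles
`{0, 2k - 1, 2k}` (plus the edge `{1, n - 1}` when `n` is even), vertex `1` has degree at most `3`
and every other vertex except the hub at most `2`, so twice the number of edges is at most
`3n - 2`; its edge `{1, 2}` lies in the single triangle `{0, 1, 2}`.
-/

open Finset

namespace SimpleGraph

variable {V : Type*} {G : SimpleGraph V}

def EdgesInTriangles (G : SimpleGraph V) : Prop :=
  ∀ ⦃u v⦄, G.Adj u v → ∃ w, G.Adj u w ∧ G.Adj v w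

theorem kDense_three_iff [Finite V] : kDense G 3 ↔ G.EdgesInTriangles := by
  refine forall₃_congr fun u v _ => ?_
  rw [show 3 - 2 = 1 from rfl, Nat.one_le_iff_ne_zero, ← Nat.pos_iff_ne_zero, Set.ncard_pos]
  rfl

theorem Preconnected.exists_adj_mem_not_mem (hG : G.Preconnected) {S : Set V} {a b : V}
    (ha : a ∈ S) (hb : b ∉ S) : ∃ u v, u ∈ S ∧ v ∉ S ∧ G.Adj u v := by
  obtain ⟨p⟩ := hG a b
  obtain ⟨d, -, hd, hd'⟩ := p.exists_boundary_dart S ha hb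
  exact ⟨_, _, hd, hd', d.adj⟩

section LowerBound

variable [DecidableEq V] [DecidableRel G.Adj]

theorem two_le_card_filter_adj {S : Finset V} {v u w : V} (hu : u ∈ S) (hw : w ∈ S)
    (huw : u ≠ w) (hvu : G.Adj v u) (hvw : G.Adj v w) : 2 ≤ #{x ∈ S | G.Adj v x} :=
  calc 2 = #{u, w} := (card_pair huw).symm
    _ ≤ _ := card_le_card (by simp [insert_subset_iff, hu, hw, hvu, hvw])

variable [Fintype V]

theorem card_edgeFinset_inter_sym2_add_le {S : Finset V} {v : V} (hv : v ∉ S) :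
    #(G.edgeFinset ∩ S.sym2) + #{u ∈ S | G.Adj v u} ≤
      #(G.edgeFinset ∩ (insert v S).sym2) := by
  rw [← card_map (Sym2.mkEmbedding v), ← card_union_of_disjoint]
  · refine card_le_card fun e he => ?_
    simp only [mem_union, mem_inter, mem_map, mem_filter] at he
    rcases he with ⟨he, hS⟩ | ⟨u, ⟨hu, hvu⟩, rfl⟩
    · exact mem_inter.2 ⟨he, sym2_mono (subset_insert v S) hS⟩
    · simp [hvu, hu]
  · refine Finset.disjoint_left.2 fun e he he' => ?_
    obtain ⟨u, -, rfl⟩ := mem_map.1 he'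
    exact hv (mem_sym2_iff.1 (mem_inter.1 he).2 v (Sym2.mem_mk_left v u))

theorem EdgesInTriangles.exists_ssuperset (hT : G.EdgesInTriangles) (hG : G.Preconnected)
    {S : Finset V} {a b : V} (ha : a ∈ S) (hb : b ∉ S)
    (hSE : 3 * (#S - 1) ≤ 2 * #(G.edgeFinset ∩ S.sym2)) :
    ∃ T, S ⊂ T ∧ 3 * (#T - 1) ≤ 2 * #(G.edgeFinset ∩ T.sym2) := by
  obtain ⟨u, v, hu, hv, huv⟩ := hG.exists_adj_mem_not_mem (mem_coe.2 ha) (mt mem_coe.1 hb)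
  rw [mem_coe] at hu hv
  obtain ⟨w, huw, hvw⟩ := hT huv
  have hvS := card_edgeFinset_inter_sym2_add_le (G := G) hv
  by_cases hw : w ∈ S
  · refine ⟨insert v S, ssubset_insert hv, ?_⟩
    have := two_le_card_filter_adj hu hw huw.ne huv.symm hvw
    rw [card_insert_of_notMem hv]
    omega
  · have hvw' : v ∉ insert w S := by simp [hv, hvw.ne]
    refine ⟨insert v (insert w S), (ssubset_insert hw).trans (ssubset_insert hvw'), ?_⟩
    have hwS := card_edgeFinset_inter_sym2_add_le (G := G) hw
    have hvwS := card_edgeFinset_inter_sym2_add_le (G := G) hvw'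
    have : 0 < #{x ∈ S | G.Adj w x} := card_pos.2 ⟨u, mem_filter.2 ⟨hu, huw.symm⟩⟩
    have := two_le_card_filter_adj (mem_insert_of_mem hu) (mem_insert_self w S) huw.ne
      huv.symm hvw
    rw [card_insert_of_notMem hvw', card_insert_of_notMem hw]
    omega

theorem EdgesInTriangles.three_mul_card_sub_one_le_of_finset (hT : G.EdgesInTriangles)
    (hG : G.Preconnected) (S : Finset V) (hS : S.Nonempty)
    (hSE : 3 * (#S - 1) ≤ 2 * #(G.edgeFinset ∩ S.sym2)) :
    3 * (Fintype.card V - 1) ≤ 2 * #G.edgeFinset := by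
  obtain ⟨a, ha⟩ := hS
  by_cases hSV : S = univ
  · simpa [hSV] using hSE
  obtain ⟨b, -, hb⟩ := exists_of_ssubset (ssubset_univ_iff.2 hSV)
  obtain ⟨T, hST, hTE⟩ := hT.exists_ssuperset hG ha hb hSE
  have := card_lt_card hST
  have := card_le_univ T
  exact hT.three_mul_card_sub_one_le_of_finset hG T ⟨a, hST.subset ha⟩ hTE
termination_by Fintype.card V - #S

theorem EdgesInTriangles.three_mul_card_sub_one_le (hT : G.EdgesInTriangles)
    (hG : G.Preconnected) : 3 * (Fintype.card V - 1) ≤ 2 * #G.edgeFinset := by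
  cases isEmpty_or_nonempty V
  · simp
  obtain ⟨a⟩ := ‹Nonempty V›
  exact hT.three_mul_card_sub_one_le_of_finset hG {a} (singleton_nonempty a) (by simp)

end LowerBound

end SimpleGraph

open SimpleGraph

def windmillRel (n a b : ℕ) : Prop :=
  a = 0 ∨ (a % 2 = 1 ∧ b = a + 1) ∨ (n % 2 = 0 ∧ a = 1 ∧ b = n - 1)

instance (n a b : ℕ) : Decidable (windmillRel n a b) := by
  unfold windmillRel; infer_instance

def windmillPartner (n a : ℕ) : ℕ :=
  if a % 2 = 0 then a - 1 else if a + 1 < n then a + 1 else 1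

def windmill (n : ℕ) : SimpleGraph (Fin n) :=
  fromRel fun a b => windmillRel n a b

theorem windmill_adj {n : ℕ} {a b : Fin n} :
    (windmill n).Adj a b ↔ (a : ℕ) ≠ b ∧ (windmillRel n a b ∨ windmillRel n b a) := by
  simp [windmill, Fin.val_ne_iff]

instance (n : ℕ) : DecidableRel (windmill n).Adj :=
  fun _ _ => decidable_of_iff _ windmill_adj.symm

section Windmill

variable {n : ℕ} (hn : 3 ≤ n)
include hn

theorem windmillPartner_lt {a : ℕ} (ha : a < n) : windmillPartner n a < n := by
  unfold windmillPartner
  split_ifs <;> omega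

theorem windmill_connected : (windmill n).Connected := by
  refine (connected_iff_exists_forall_reachable _).2 ⟨⟨0, by omega⟩, fun v => ?_⟩
  by_cases hv : (v : ℕ) = 0
  · rw [show v = ⟨0, by omega⟩ from Fin.ext hv]
  · exact Adj.reachable (windmill_adj.2 ⟨by simpa [eq_comm] using hv, by simp [windmillRel]⟩)

theorem windmill_edgesInTriangles : (windmill n).EdgesInTriangles := by
  intro u v huv
  rw [windmill_adj] at huv
  by_cases hu : (u : ℕ) = 0
  · refine ⟨⟨windmillPartner n v, windmillPartner_lt hn v.2⟩, ?_, ?_⟩ <;>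
      simp only [windmill_adj, windmillRel, windmillPartner] at huv ⊢ <;> split_ifs <;> omega
  by_cases hv : (v : ℕ) = 0
  · refine ⟨⟨windmillPartner n u, windmillPartner_lt hn u.2⟩, ?_, ?_⟩ <;>
      simp only [windmill_adj, windmillRel, windmillPartner] at huv ⊢ <;> split_ifs <;> omega
  · exact ⟨⟨0, by omega⟩, by simp [windmill_adj, windmillRel, hu],
      by simp [windmill_adj, windmillRel, hv]⟩

theorem windmill_not_kDense_four : ¬ kDense (windmill n) 4 := by
  intro h
  have h12 := h ⟨1, by omega⟩ ⟨2, by omega⟩ (windmill_adj.2 (by simp [windmillRel]))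
  have : (windmill n).neighborSet ⟨1, by omega⟩ ∩ (windmill n).neighborSet ⟨2, by omega⟩ ⊆
      {⟨0, by omega⟩} := by
    rintro x ⟨h1, h2⟩
    simp only [mem_neighborSet, windmill_adj, windmillRel] at h1 h2
    exact Fin.ext (by simp only; omega)
  have := (Set.ncard_le_ncard this).trans (Set.ncard_singleton _).le
  omega

theorem degree_windmill_le (v : Fin n) :
    (windmill n).degree v ≤ if (v : ℕ) = 0 then n - 1 else if (v : ℕ) = 1 then 3 else 2 := by
  split_ifs with h0 h1
  · exact Nat.le_sub_one_of_lt (by simpa using (windmill n).degree_lt_card_verts v)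
  · refine (card_le_card fun x hx => ?_).trans (card_le_three (a := ⟨0, by omega⟩)
      (b := ⟨2, by omega⟩) (c := ⟨n - 1, by omega⟩))
    simp only [mem_neighborFinset, windmill_adj, windmillRel] at hx
    simp only [mem_insert, mem_singleton, Fin.ext_iff]
    omega
  · refine (card_le_card fun x hx => ?_).trans (card_le_two (a := ⟨0, by omega⟩)
      (b := ⟨windmillPartner n v, windmillPartner_lt hn v.2⟩))
    simp only [mem_neighborFinset, windmill_adj, windmillRel] at hx
    simp only [mem_insert, mem_singleton, Fin.ext_iff, windmillPartner]
    split_ifs <;> omega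

theorem two_mul_card_edgeFinset_windmill_le : 2 * #(windmill n).edgeFinset ≤ 3 * n - 2 := by
  rw [← sum_degrees_eq_twice_card_edges]
  refine (sum_le_sum fun v _ => degree_windmill_le hn v).trans ?_
  obtain ⟨m, rfl⟩ : ∃ m, n = m + 3 := ⟨n - 3, by omega⟩
  simp only [Fin.sum_univ_succ, Fin.val_eq_zero_iff, Fin.succ_ne_zero, ↓reduceIte, Fin.val_succ,
    Nat.add_eq_right, sum_const, card_univ, Fintype.card_fin, smul_eq_mul]
  omega

end Windmill

/-- The minimum number of edges of a connected 3*-dense graph on n ≥ 3 vertices is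
⌈3(n−1)/2⌉. -/
theorem min_edges_threeStarDense (n : ℕ) (hn : 3 ≤ n) :
    IsLeast {m : ℕ | ∃ G : SimpleGraph (Fin n),
        G.Connected ∧ kStarDense G 3 ∧ G.edgeSet.ncard = m}
      ((3 * (n - 1) + 1) / 2) := by
  have lower (G : SimpleGraph (Fin n)) (hG : G.Connected) (hT : kDense G 3) :
      3 * (n - 1) ≤ 2 * G.edgeSet.ncard := by
    classical
    simpa [← coe_edgeFinset, Set.ncard_coe_finset] using
      (kDense_three_iff.1 hT).three_mul_card_sub_one_le hG.preconnected
  have hT := kDense_three_iff.2 (windmill_edgesInTriangles hn)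
  refine ⟨⟨windmill n, windmill_connected hn, ⟨hT, windmill_not_kDense_four hn⟩, ?_⟩, ?_⟩
  · have hle := two_mul_card_edgeFinset_windmill_le hn
    have hge := lower _ (windmill_connected hn) hT
    rw [← coe_edgeFinset, Set.ncard_coe_finset] at hge ⊢
    omega
  · rintro m ⟨G, hG, ⟨hT, -⟩, rfl⟩
    have := lower G hG hT
    omega
end

section
/- For every integer n ≥ 4, the minimum number of edges in a connected 4*-dense graph on n vertices is 2n−2 if n ≡ 1 (mod 3), and 2n−1 otherwise. -/
/-!
Call two edges *triangle-adjacent* if they are two sides of a triangle, and split the edge set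
into the classes of the equivalence relation this generates. In a 4-dense graph every vertex of a
class `C` has degree at least 3 in `C`. If some vertex has degree exactly 3, its three neighbours
are pairwise adjacent, and `C` is obtained from this `K₄` by repeatedly adding the two other sides
of a triangle over an existing edge; a step that adds a vertex adds two edges, so
`|C| ≥ 2 |V(C)| - 2`, with equality only for `C = K₄`. Otherwise all degrees in `C` are at least 4
and `|C| ≥ 2 |V(C)|`. As `G` is connected, `∑ (|V(C)| - 1) ≥ n - 1`, hence `|E| ≥ 2n - 2`, and
equality forces every class to be a `K₄`, so that `6 ∣ 2n - 2`. A chain of `K₄`'s sharing cut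
vertices, closed off by a `K₅` minus an edge or by two `K₄`'s sharing an edge when
`n ≢ 1 (mod 3)`, attains the bound.
-/

open Finset

lemma Relation.ReflTransGen.exists_rel_of_not {α : Type*} {r : α → α → Prop}
    {p : α → Prop} {a b : α} (h : Relation.ReflTransGen r a b) (ha : p a) (hb : ¬ p b) :
    ∃ c d, p c ∧ ¬ p d ∧ r c d := by
  induction h with
  | refl => exact absurd ha hb
  | @tail c d _ hcd ih =>
    by_cases hc : p c
    · exact ⟨c, d, hc, hb, hcd⟩
    · exact ih hc

namespace SimpleGraph

section LowerBound

variable {V : Type*}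

section EdgeFinset

variable [DecidableEq V]

def edgeVerts (F : Finset (Sym2 V)) : Finset V := F.biUnion Sym2.toFinset

def edgeNbrs [Fintype V] (F : Finset (Sym2 V)) (v : V) : Finset V := {w | s(v, w) ∈ F}

variable {F : Finset (Sym2 V)} {u v w x y z : V}

@[simp]
lemma mem_edgeVerts : v ∈ edgeVerts F ↔ ∃ e ∈ F, v ∈ e := by
  simp [edgeVerts]

@[simp]
lemma mem_edgeNbrs [Fintype V] : w ∈ edgeNbrs F v ↔ s(v, w) ∈ F := by
  simp [edgeNbrs]

lemma mem_edgeVerts_left (h : s(v, w) ∈ F) : v ∈ edgeVerts F :=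
  mem_edgeVerts.2 ⟨_, h, Sym2.mem_mk_left v w⟩

lemma mem_edgeVerts_right (h : s(v, w) ∈ F) : w ∈ edgeVerts F :=
  mem_edgeVerts.2 ⟨_, h, Sym2.mem_mk_right v w⟩

lemma edgeVerts_insert (e : Sym2 V) (F : Finset (Sym2 V)) :
    edgeVerts (insert e F) = e.toFinset ∪ edgeVerts F :=
  biUnion_insert

lemma card_edgeNbrs [Fintype V] (F : Finset (Sym2 V)) (v : V) :
    #(edgeNbrs F v) = #{e ∈ F | v ∈ e} := by
  rw [← card_image_of_injective _ (Sym2.mkEmbedding v).injective]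
  congr 1
  ext e
  simp only [mem_image, mem_edgeNbrs, mem_filter, Sym2.mkEmbedding_apply]
  constructor
  · rintro ⟨w, hw, rfl⟩
    exact ⟨hw, Sym2.mem_mk_left v w⟩
  · rintro ⟨he, hv⟩
    obtain ⟨w, rfl⟩ := Sym2.mem_iff_exists.1 hv
    exact ⟨w, he, rfl⟩

lemma sum_card_edgeNbrs_le [Fintype V] (F : Finset (Sym2 V)) :
    ∑ v, #(edgeNbrs F v) ≤ 2 * #F := by
  have hcount := sum_card_bipartiteAbove_eq_sum_card_bipartiteBelow
    (s := (univ : Finset V)) (t := F) (r := fun v e => v ∈ e)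
  simp only [bipartiteAbove, bipartiteBelow] at hcount
  simp_rw [card_edgeNbrs, hcount, mul_comm 2]
  refine sum_le_card_nsmul _ _ _ fun e _ => ?_
  have : ({v | v ∈ e} : Finset V) = e.toFinset := by ext; simp
  rw [this, Sym2.card_toFinset]
  split_ifs <;> omega

inductive GrownFromK4 : Finset (Sym2 V) → Prop
  | k4 {a b c d : V} (hab : a ≠ b) (hac : a ≠ c) (had : a ≠ d) (hbc : b ≠ c) (hbd : b ≠ d)
      (hcd : c ≠ d) : GrownFromK4 {s(a, b), s(a, c), s(a, d), s(b, c), s(b, d), s(c, d)}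
  | addTriangle {F : Finset (Sym2 V)} {x y z : V} (hF : GrownFromK4 F) (hxy : s(x, y) ∈ F)
      (hxy' : x ≠ y) (hxz : x ≠ z) (hyz : y ≠ z) :
      GrownFromK4 (insert s(x, z) (insert s(y, z) F))

lemma edgeVerts_addTriangle (hxy : s(x, y) ∈ F) :
    edgeVerts (insert s(x, z) (insert s(y, z) F)) = insert z (edgeVerts F) := by
  have hx := mem_edgeVerts_left hxy
  have hy := mem_edgeVerts_right hxy
  ext v
  simp only [edgeVerts_insert, Sym2.toFinset_mk_eq, mem_union, mem_insert, mem_singleton]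
  grind

lemma card_edgeVerts_k4 {a b c d : V} (hab : a ≠ b) (hac : a ≠ c) (had : a ≠ d) (hbc : b ≠ c)
    (hbd : b ≠ d) (hcd : c ≠ d) :
    #(edgeVerts {s(a, b), s(a, c), s(a, d), s(b, c), s(b, d), s(c, d)}) = 4 ∧
      #({s(a, b), s(a, c), s(a, d), s(b, c), s(b, d), s(c, d)} : Finset (Sym2 V)) = 6 := by
  have hverts :
      edgeVerts {s(a, b), s(a, c), s(a, d), s(b, c), s(b, d), s(c, d)} = {a, b, c, d} := by
    ext v
    simp only [mem_edgeVerts, mem_insert, mem_singleton, or_and_right, exists_or,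
      exists_eq_left, Sym2.mem_iff]
    tauto
  rw [hverts]
  constructor <;> simp [*]

lemma GrownFromK4.card_edgeVerts [Fintype V] (hF : GrownFromK4 F) :
    2 * #(edgeVerts F) ≤ #F + 2 ∧ (#F + 2 = 2 * #(edgeVerts F) →
      #(edgeVerts F) = 4 ∨ ∃ v ∈ edgeVerts F, #(edgeNbrs F v) ≤ 2) := by
  induction hF with
  | k4 hab hac had hbc hbd hcd =>
    obtain ⟨hV, hE⟩ := card_edgeVerts_k4 hab hac had hbc hbd hcd
    omega
  | @addTriangle F x y z _ hxy hxy' hxz hyz ih =>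
    set F' := insert s(x, z) (insert s(y, z) F)
    have hsub : F ⊆ F' := (subset_insert _ _).trans (subset_insert _ _)
    rw [edgeVerts_addTriangle hxy]
    by_cases hz : z ∈ edgeVerts F
    · rw [insert_eq_of_mem hz]
      rcases (card_le_card hsub).eq_or_lt with hcard | hcard
      · rwa [← eq_of_subset_of_card_le hsub hcard.ge]
      · omega
    · have hxz' : s(x, z) ∉ F := fun h => hz (mem_edgeVerts_right h)
      have hyz' : s(y, z) ∉ F := fun h => hz (mem_edgeVerts_right h)
      have hcard : #F' = #F + 2 := by
        rw [card_insert_of_notMem, card_insert_of_notMem hyz']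
        simp [hxz', hxy', hxz]
      have hnbrs : edgeNbrs F' z ⊆ {x, y} := by
        intro w hw
        simp only [F', mem_edgeNbrs, mem_insert, Sym2.eq_iff] at hw
        rcases hw with hw | hw | hw
        · grind
        · grind
        · exact absurd (mem_edgeVerts_left hw) hz
      rw [card_insert_of_notMem hz, hcard]
      refine ⟨by omega, fun _ => Or.inr ⟨z, mem_insert_self z _, ?_⟩⟩
      exact (card_le_card hnbrs).trans card_le_two

lemma GrownFromK4.nonempty (hF : GrownFromK4 F) : F.Nonempty := by
  cases hF <;> exact insert_nonempty _ _

end EdgeFinset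

/-- The stars joining a chosen root of each `S i` to the rest of `S i` form a connected graph
with at most `∑ (#(S i) - 1)` edges. -/
theorem Connected.card_le_sum_card_sub_one_add_one [Fintype V] {G : SimpleGraph V}
    (hG : G.Connected) {ι : Type*} (s : Finset ι) (S : ι → Finset V)
    (hcover : ∀ u v, G.Adj u v → ∃ i ∈ s, u ∈ S i ∧ v ∈ S i) :
    Fintype.card V ≤ ∑ i ∈ s, (#(S i) - 1) + 1 := by
  classical
  have := hG.nonempty
  have hroots : ∀ i, ∃ r, (S i).Nonempty → r ∈ S i := fun i =>
    (S i).eq_empty_or_nonempty.elim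
      (fun h => ⟨Classical.arbitrary V, fun h' => absurd h (nonempty_iff_ne_empty.1 h')⟩)
      (fun ⟨v, hv⟩ => ⟨v, fun _ => hv⟩)
  choose r hr using hroots
  set H := fromRel fun x y => ∃ i ∈ s, x = r i ∧ y ∈ S i
  have hroot : ∀ i ∈ s, ∀ y ∈ S i, H.Reachable (r i) y := by
    intro i hi y hy
    by_cases h : r i = y
    · exact h ▸ Reachable.refl _
    · exact Adj.reachable ((fromRel_adj _ _ _).2 ⟨h, Or.inl ⟨i, hi, rfl, hy⟩⟩)
  have hH : H.Connected := by
    refine ⟨fun u v => ?_⟩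
    rw [reachable_iff_reflTransGen]
    refine Relation.reflTransGen_closed (fun a b hab => ?_) _ _
      ((reachable_iff_reflTransGen _ _).1 (hG.preconnected u v))
    obtain ⟨i, hi, ha, hb⟩ := hcover a b hab
    exact (reachable_iff_reflTransGen _ _).1 ((hroot i hi a ha).symm.trans (hroot i hi b hb))
  have hedges : H.edgeSet ⊆ ↑(s.biUnion fun i => ((S i).erase (r i)).image (s(r i, ·))) := by
    intro e he
    induction e with
    | _ a b =>
      obtain ⟨hab, ⟨i, hi, rfl, hb⟩ | ⟨i, hi, rfl, ha⟩⟩ :=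
        (fromRel_adj _ _ _).1 ((mem_edgeSet _).1 he)
      · exact mem_biUnion.2 ⟨i, hi, mem_image.2 ⟨b, mem_erase.2 ⟨hab.symm, hb⟩, rfl⟩⟩
      · exact mem_biUnion.2 ⟨i, hi, mem_image.2 ⟨a, mem_erase.2 ⟨hab, ha⟩, Sym2.eq_swap⟩⟩
  calc Fintype.card V = Nat.card V := Nat.card_eq_fintype_card.symm
    _ ≤ Nat.card H.edgeSet + 1 := hH.card_vert_le_card_edgeSet_add_one
    _ ≤ #(s.biUnion fun i => ((S i).erase (r i)).image (s(r i, ·))) + 1 := by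
      rw [Nat.card_coe_set_eq, ← Set.ncard_coe_finset]
      exact Nat.add_le_add_right (Set.ncard_le_ncard hedges) 1
    _ ≤ ∑ i ∈ s, (#(S i) - 1) + 1 := by
      gcongr
      refine card_biUnion_le.trans (sum_le_sum fun i _ => card_image_le.trans ?_)
      rcases (S i).eq_empty_or_nonempty with h | h
      · simp [h]
      · exact (card_erase_of_mem (hr i h)).le

variable {G : SimpleGraph V} {e f g : Sym2 V}

def TriangleAdj (G : SimpleGraph V) (e f : Sym2 V) : Prop :=
  ∃ x y z, G.Adj x y ∧ G.Adj x z ∧ G.Adj y z ∧ e = s(x, y) ∧ f = s(x, z)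

lemma TriangleAdj.symm : TriangleAdj G e f → TriangleAdj G f e
  | ⟨x, y, z, hxy, hxz, hyz, he, hf⟩ => ⟨x, z, y, hxz, hxy, hyz.symm, hf, he⟩

lemma TriangleAdj.mem_edgeSet : TriangleAdj G e f → f ∈ G.edgeSet
  | ⟨_, _, _, _, hxz, _, _, hf⟩ => hf ▸ hxz

lemma two_le_card_inter_neighborFinset_of_kDense [Fintype V] [DecidableRel G.Adj] [DecidableEq V]
    (hD : kDense G 4) {u v : V} (h : G.Adj u v) :
    2 ≤ #(G.neighborFinset u ∩ G.neighborFinset v) := by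
  have := hD u v h
  rwa [← Set.ncard_coe_finset, coe_inter, coe_neighborFinset, coe_neighborFinset]

variable [Fintype V] [DecidableRel G.Adj]

open Classical in
noncomputable def triangleClass (G : SimpleGraph V) [DecidableRel G.Adj] (e : Sym2 V) :
    Finset (Sym2 V) :=
  {f ∈ G.edgeFinset | Relation.ReflTransGen (TriangleAdj G) e f}

lemma mem_triangleClass :
    f ∈ triangleClass G e ↔ f ∈ G.edgeSet ∧ Relation.ReflTransGen (TriangleAdj G) e f := by
  simp [triangleClass]

lemma triangleClass_subset : triangleClass G e ⊆ G.edgeFinset :=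
  fun _ hf => mem_edgeFinset.2 (mem_triangleClass.1 hf).1

lemma mem_triangleClass_self (he : e ∈ G.edgeSet) : e ∈ triangleClass G e :=
  mem_triangleClass.2 ⟨he, .refl⟩

lemma TriangleAdj.mem_triangleClass (h : TriangleAdj G f g) (hf : f ∈ triangleClass G e) :
    g ∈ triangleClass G e :=
  SimpleGraph.mem_triangleClass.2 ⟨h.mem_edgeSet, (SimpleGraph.mem_triangleClass.1 hf).2.tail h⟩

lemma reflTransGen_of_mem_triangleClass (hf : f ∈ triangleClass G e)
    (hg : g ∈ triangleClass G e) : Relation.ReflTransGen (TriangleAdj G) f g :=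
  have : Std.Symm (TriangleAdj G) := ⟨fun _ _ => TriangleAdj.symm⟩
  (Relation.ReflTransGen.stdSymm.symm _ _ (mem_triangleClass.1 hf).2).trans
    (mem_triangleClass.1 hg).2

lemma triangleClass_eq_of_mem (hf : f ∈ triangleClass G e) :
    triangleClass G f = triangleClass G e := by
  ext g
  simp only [mem_triangleClass, and_congr_right_iff]
  intro _
  have : Std.Symm (TriangleAdj G) := ⟨fun _ _ => TriangleAdj.symm⟩
  have hef := (mem_triangleClass.1 hf).2
  exact ⟨hef.trans, (Relation.ReflTransGen.stdSymm.symm _ _ hef).trans⟩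

lemma mem_triangleClass_of_adj {u v w : V} (huv : s(u, v) ∈ triangleClass G e)
    (hu : G.Adj u w) (hv : G.Adj v w) : s(u, w) ∈ triangleClass G e :=
  TriangleAdj.mem_triangleClass ⟨u, v, w, mem_triangleClass.1 huv |>.1, hu, hv, rfl, rfl⟩ huv

variable [DecidableEq V]

lemma inter_neighborFinset_subset {x y : V} (hxy : s(x, y) ∈ triangleClass G e) :
    G.neighborFinset x ∩ G.neighborFinset y ⊆ (edgeNbrs (triangleClass G e) x).erase y := by
  intro w hw
  rw [mem_inter, mem_neighborFinset, mem_neighborFinset] at hw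
  exact mem_erase.2 ⟨hw.2.ne', mem_edgeNbrs.2 (mem_triangleClass_of_adj hxy hw.1 hw.2)⟩

lemma three_le_card_edgeNbrs (hD : kDense G 4) {v : V}
    (hv : v ∈ edgeVerts (triangleClass G e)) :
    3 ≤ #(edgeNbrs (triangleClass G e) v) := by
  obtain ⟨f, hf, hvf⟩ := mem_edgeVerts.1 hv
  obtain ⟨u, rfl⟩ := Sym2.mem_iff_exists.1 hvf
  have h2 := (two_le_card_inter_neighborFinset_of_kDense hD (mem_triangleClass.1 hf).1).trans
    (card_le_card (inter_neighborFinset_subset (x := v) (y := u) hf))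
  have := card_erase_add_one (mem_edgeNbrs.2 hf)
  omega

lemma exists_grownFromK4_subset_triangleClass (hD : kDense G 4) {v : V}
    (h3 : #(edgeNbrs (triangleClass G e) v) = 3) :
    ∃ F ⊆ triangleClass G e, GrownFromK4 F := by
  set C := triangleClass G e
  obtain ⟨a, b, c, hab, hac, hbc, hN⟩ := card_eq_three.1 h3
  have hadj_nbrs : ∀ x ∈ edgeNbrs C v, ∀ w ∈ edgeNbrs C v, x ≠ w → G.Adj x w := by
    intro x hx w hw hxw
    have hsub := inter_neighborFinset_subset (mem_edgeNbrs.1 hx)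
    have heq := eq_of_subset_of_card_le hsub <| by
      rw [card_erase_of_mem hx, h3]
      exact two_le_card_inter_neighborFinset_of_kDense hD
        (mem_triangleClass.1 (mem_edgeNbrs.1 hx)).1
    have : w ∈ G.neighborFinset v ∩ G.neighborFinset x := heq ▸ mem_erase.2 ⟨hxw.symm, hw⟩
    exact (mem_neighborFinset _ _ _).1 (mem_inter.1 this).2
  have ha : a ∈ edgeNbrs C v := by simp [hN]
  have hb : b ∈ edgeNbrs C v := by simp [hN]
  have hc : c ∈ edgeNbrs C v := by simp [hN]
  have hva := mem_edgeNbrs.1 ha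
  have hvb := mem_edgeNbrs.1 hb
  have hvc := mem_edgeNbrs.1 hc
  have hab' := hadj_nbrs a ha b hb hab
  have hac' := hadj_nbrs a ha c hc hac
  have hbc' := hadj_nbrs b hb c hc hbc
  have hAdj : ∀ {x}, s(v, x) ∈ C → G.Adj v x := fun h => (mem_triangleClass.1 h).1
  refine ⟨_, ?_, .k4 (hAdj hva).ne (hAdj hvb).ne (hAdj hvc).ne hab hac hbc⟩
  have hcl : ∀ {x w}, s(v, x) ∈ C → s(v, w) ∈ C → G.Adj x w → s(x, w) ∈ C :=
    fun hx hw hxw => mem_triangleClass_of_adj (Sym2.eq_swap ▸ hx) hxw (hAdj hw)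
  simp only [insert_subset_iff, singleton_subset_iff]
  exact ⟨hva, hvb, hvc, hcl hva hvb hab', hcl hva hvc hac', hcl hvb hvc hbc'⟩

lemma grownFromK4_triangleClass_of_subset (hF : GrownFromK4 F) (hFC : F ⊆ triangleClass G e) :
    GrownFromK4 (triangleClass G e) := by
  by_cases hCF : triangleClass G e ⊆ F
  · rwa [← subset_antisymm hFC hCF]
  obtain ⟨g, hgC, hgF⟩ := not_subset.1 hCF
  obtain ⟨f, hf⟩ := hF.nonempty
  obtain ⟨_, _, hxyF, hxzF, x, y, z, hxy, hxz, hyz, rfl, rfl⟩ :=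
    (reflTransGen_of_mem_triangleClass (hFC hf) hgC).exists_rel_of_not (p := (· ∈ F)) hf hgF
  have hxy_mem := hFC hxyF
  have hF'C : insert s(x, z) (insert s(y, z) F) ⊆ triangleClass G e :=
    insert_subset (mem_triangleClass_of_adj hxy_mem hxz hyz)
      (insert_subset (mem_triangleClass_of_adj (Sym2.eq_swap ▸ hxy_mem) hyz hxz) hFC)
  have hlt : #F < #(insert s(x, z) (insert s(y, z) F)) :=
    card_lt_card (ssubset_of_subset_of_ne ((subset_insert _ _).trans (subset_insert _ _))
      fun h => hxzF (h ▸ mem_insert_self _ _))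
  have := card_le_card hF'C
  exact grownFromK4_triangleClass_of_subset (hF.addTriangle hxyF hxy.ne hxz.ne hyz.ne) hF'C
termination_by #(triangleClass G e) - #F

lemma card_triangleClass_of_kDense (hD : kDense G 4) (he : e ∈ G.edgeSet) :
    2 * (#(edgeVerts (triangleClass G e)) - 1) ≤ #(triangleClass G e) ∧
      (#(triangleClass G e) = 2 * (#(edgeVerts (triangleClass G e)) - 1) →
        #(triangleClass G e) = 6) := by
  have hCpos : 0 < #(triangleClass G e) := card_pos.2 ⟨e, mem_triangleClass_self he⟩
  by_cases h3 : ∃ v, #(edgeNbrs (triangleClass G e) v) = 3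
  · obtain ⟨v, hv⟩ := h3
    obtain ⟨F, hFC, hF⟩ := exists_grownFromK4_subset_triangleClass hD hv
    obtain ⟨hle, heq⟩ := (grownFromK4_triangleClass_of_subset hF hFC).card_edgeVerts
    refine ⟨by omega, fun h => ?_⟩
    obtain h4 | ⟨w, hw, hw2⟩ := heq (by omega)
    · omega
    · have := three_le_card_edgeNbrs hD hw
      omega
  · push Not at h3
    set C := triangleClass G e
    have hdeg : ∀ v ∈ edgeVerts C, 4 ≤ #(edgeNbrs C v) :=
      fun v hv => (three_le_card_edgeNbrs hD hv).lt_of_ne (h3 v).symm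
    have : 4 * #(edgeVerts C) ≤ 2 * #C :=
      calc 4 * #(edgeVerts C) ≤ ∑ v ∈ edgeVerts C, #(edgeNbrs C v) := by
            rw [mul_comm]; exact card_nsmul_le_sum _ _ _ hdeg
        _ ≤ ∑ v, #(edgeNbrs C v) := sum_le_sum_of_subset (subset_univ _)
        _ ≤ 2 * #C := sum_card_edgeNbrs_le C
    omega

lemma card_edgeFinset_eq_sum_card_triangleClass :
    #G.edgeFinset = ∑ C ∈ G.edgeFinset.image (triangleClass G), #C := by
  rw [card_eq_sum_card_fiberwise fun e he => mem_image_of_mem (triangleClass G) he]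
  refine sum_congr rfl fun C hC => ?_
  obtain ⟨e, -, rfl⟩ := mem_image.1 hC
  congr 1
  ext f
  simp only [mem_filter]
  exact ⟨fun ⟨hf, h⟩ => h ▸ mem_triangleClass_self (mem_edgeFinset.1 hf),
    fun hf => ⟨triangleClass_subset hf, triangleClass_eq_of_mem hf⟩⟩

end LowerBound

theorem Connected.card_edgeFinset_of_kDense {V : Type*} [Fintype V] {G : SimpleGraph V}
    [DecidableRel G.Adj] (hG : G.Connected) (hD : kDense G 4) :
    2 * Fintype.card V - 2 ≤ #G.edgeFinset ∧
      (#G.edgeFinset = 2 * Fintype.card V - 2 → Fintype.card V % 3 = 1) := by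
  classical
  set 𝒞 := G.edgeFinset.image (triangleClass G)
  have hbound : ∀ C ∈ 𝒞, 2 * (#(edgeVerts C) - 1) ≤ #C ∧
      (#C = 2 * (#(edgeVerts C) - 1) → #C = 6) := by
    intro C hC
    obtain ⟨e, he, rfl⟩ := mem_image.1 hC
    exact card_triangleClass_of_kDense hD (mem_edgeFinset.1 he)
  have hstar := hG.card_le_sum_card_sub_one_add_one 𝒞 edgeVerts fun u v huv =>
    have h := mem_triangleClass_self huv
    ⟨_, mem_image_of_mem _ (mem_edgeFinset.2 huv), mem_edgeVerts_left h, mem_edgeVerts_right h⟩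
  have hE : #G.edgeFinset = ∑ C ∈ 𝒞, #C := card_edgeFinset_eq_sum_card_triangleClass
  have hsum : 2 * ∑ C ∈ 𝒞, (#(edgeVerts C) - 1) ≤ ∑ C ∈ 𝒞, #C := by
    rw [mul_sum]
    exact sum_le_sum fun C hC => (hbound C hC).1
  have := hG.nonempty
  have hn : 0 < Fintype.card V := Fintype.card_pos
  refine ⟨by omega, fun heq => ?_⟩
  have htight := (sum_eq_sum_iff_of_le fun C hC => (hbound C hC).1).1 (by rw [← mul_sum]; omega)
  have h6 : #G.edgeFinset = 6 * #𝒞 := by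
    rw [hE, sum_congr rfl fun C hC => (hbound C hC).2 (htight C hC).symm, sum_const, smul_eq_mul,
      mul_comm]
  omega

lemma kDense_of_forall_adj_exists_isNClique {V : Type*} [Finite V] {G : SimpleGraph V} {k : ℕ}
    (h : ∀ u v, G.Adj u v → ∃ s : Finset V, G.IsNClique k s ∧ u ∈ s ∧ v ∈ s) : kDense G k := by
  classical
  intro u v huv
  obtain ⟨s, hs, hu, hv⟩ := h u v huv
  have hsub :
      (((s.erase u).erase v : Finset V) : Set V) ⊆ G.neighborSet u ∩ G.neighborSet v := by
    intro w hw
    simp only [coe_erase, Set.mem_sdiff, mem_coe, Set.mem_singleton_iff] at hw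
    obtain ⟨⟨hws, hwu⟩, hwv⟩ := hw
    exact ⟨hs.isClique hu hws (Ne.symm hwu), hs.isClique hv hws (Ne.symm hwv)⟩
  calc k - 2 = #((s.erase u).erase v) := by
        rw [card_erase_of_mem (mem_erase.2 ⟨huv.ne', hv⟩), card_erase_of_mem hu, hs.card_eq]; rfl
    _ ≤ _ := Set.ncard_coe_finset ((s.erase u).erase v) ▸ Set.ncard_le_ncard hsub

lemma ncard_edgeSet_fromRel_low_le (n : ℕ) (low : ℕ → ℕ) :
    (fromRel fun u v : Fin n => (u : ℕ) < v ∧ low v ≤ u).edgeSet.ncard =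
      ∑ v ∈ range n, (v - low v) := by
  classical
  simp_rw [Set.ncard_eq_toFinset_card', ← Nat.card_Ico, ← card_sigma]
  symm
  refine card_bij (fun p hp => s(⟨p.2, ?_⟩, ⟨p.1, ?_⟩)) ?_ ?_ ?_
  · simp only [mem_sigma, mem_range, mem_Ico] at hp
    omega
  · exact mem_range.1 (mem_sigma.1 hp).1
  · rintro ⟨v, u⟩ hp
    simp only [mem_sigma, mem_range, mem_Ico] at hp
    simp only [Set.mem_toFinset, mem_edgeSet, fromRel_adj, ne_eq, Fin.mk.injEq]
    omega
  · rintro ⟨v₁, u₁⟩ hp₁ ⟨v₂, u₂⟩ hp₂ h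
    simp only [mem_sigma, mem_range, mem_Ico] at hp₁ hp₂
    simp only [Sym2.eq_iff, Fin.mk.injEq] at h
    obtain ⟨rfl, rfl⟩ : u₁ = u₂ ∧ v₁ = v₂ := by omega
    rfl
  · intro e he
    induction e with
    | _ a b =>
      simp only [Set.mem_toFinset, mem_edgeSet, fromRel_adj] at he
      obtain ⟨-, ⟨hab, hlow⟩ | ⟨hba, hlow⟩⟩ := he
      · exact ⟨⟨b, a⟩, by simp [hab, hlow], rfl⟩
      · exact ⟨⟨a, b⟩, by simp [hba, hlow], Sym2.eq_swap⟩

/-- `k4Chain n` joins each vertex `v` to the earlier vertices `u ≥ k4ChainLow n v`. With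
`t = (n - 1) % 3`, the vertices below `n - t` form a chain of `K₄`'s on `{3j, …, 3j + 3}`, and each
of the last `t` vertices is joined to everything from `n - 4` on: for `t = 1` the last `K₄` becomes
a `K₅` minus an edge, for `t = 2` a second `K₄` is glued along an edge. -/
def k4ChainLow (n v : ℕ) : ℕ := if v < n - (n - 1) % 3 then 3 * ((v - 1) / 3) else n - 4

def k4Chain (n : ℕ) : SimpleGraph (Fin n) :=
  fromRel fun u v => (u : ℕ) < v ∧ k4ChainLow n v ≤ u

lemma k4ChainLow_bounds {n v : ℕ} (hn : 4 ≤ n) (hv : v < n) (hv0 : 0 < v) :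
    k4ChainLow n v < v ∧ v ≤ k4ChainLow n v + 3 ∧ k4ChainLow n v + 3 < n := by
  unfold k4ChainLow; split_ifs <;> omega

lemma k4ChainLow_le_of_le_of_lt {n v a b : ℕ} (hn : 4 ≤ n) (ha : k4ChainLow n v ≤ a)
    (hab : a < b) (hb : b ≤ k4ChainLow n v + 3) :
    k4ChainLow n b ≤ a := by
  unfold k4ChainLow at *; split_ifs at * <;> omega

lemma eq_two_or_eq_three_of_k4ChainLow_eq_zero {n w : ℕ} (hw : w < n) (h0 : k4ChainLow n w = 0)
    (h1 : 1 < w) : w = 2 ∨ w = 3 := by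
  unfold k4ChainLow at *; split_ifs at * <;> omega

lemma sum_range_sub_three_mul_div_three (k : ℕ) :
    ∑ v ∈ range (3 * k + 1), (v - 3 * ((v - 1) / 3)) = 6 * k := by
  induction k with
  | zero => simp
  | succ k ih =>
    rw [show 3 * (k + 1) + 1 = 3 * k + 1 + 1 + 1 + 1 by ring, sum_range_succ, sum_range_succ,
      sum_range_succ, ih]
    omega

lemma sum_k4ChainLow {n : ℕ} (hn : 4 ≤ n) :
    ∑ v ∈ range n, (v - k4ChainLow n v) = if n % 3 = 1 then 2 * n - 2 else 2 * n - 1 := by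
  obtain ⟨k, t, ht, rfl⟩ : ∃ k t, t < 3 ∧ n = 3 * k + 1 + t :=
    ⟨(n - 1) / 3, (n - 1) % 3, Nat.mod_lt _ (by norm_num), by omega⟩
  have hchain : ∑ v ∈ range (3 * k + 1), (v - k4ChainLow (3 * k + 1 + t) v) = 6 * k := by
    rw [← sum_range_sub_three_mul_div_three k]
    refine sum_congr rfl fun v hv => ?_
    rw [k4ChainLow, if_pos (by simp at hv; omega)]
  simp only [show (3 * k + 1 + t) % 3 = 1 ↔ t = 0 by omega]
  rw [sum_range_add, hchain]
  interval_cases t <;> simp [sum_range_succ, k4ChainLow] <;> omega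

lemma k4Chain_adj {n : ℕ} {u v : Fin n} :
    (k4Chain n).Adj u v ↔
      u ≠ v ∧ ((u : ℕ) < v ∧ k4ChainLow n v ≤ u ∨ (v : ℕ) < u ∧ k4ChainLow n u ≤ v) :=
  fromRel_adj _ _ _

lemma k4Chain_connected {n : ℕ} (hn : 4 ≤ n) : (k4Chain n).Connected := by
  have : Nonempty (Fin n) := ⟨⟨0, by omega⟩⟩
  refine ⟨(pathGraph_preconnected n).mono fun u v huv => ?_⟩
  rw [pathGraph_adj] at huv
  rw [k4Chain_adj, ne_eq, Fin.ext_iff]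
  have hu := k4ChainLow_bounds (v := u) hn u.isLt
  have hv := k4ChainLow_bounds (v := v) hn v.isLt
  omega

lemma k4Chain_isNClique_block {n : ℕ} (hn : 4 ≤ n) (v : Fin n) (hv : 0 < (v : ℕ)) :
    (k4Chain n).IsNClique 4 (Icc ⟨k4ChainLow n v, by have := k4ChainLow_bounds hn v.isLt hv; omega⟩
      ⟨k4ChainLow n v + 3, (k4ChainLow_bounds hn v.isLt hv).2.2⟩) := by
  refine ⟨fun a ha b hb hab => ?_, by simp [Fin.card_Icc]; omega⟩
  simp only [coe_Icc, Set.mem_Icc, Fin.le_def] at ha hb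
  rw [k4Chain_adj]
  refine ⟨hab, ?_⟩
  rcases Nat.lt_or_gt_of_ne (Fin.val_ne_of_ne hab) with h | h
  · exact Or.inl ⟨h, k4ChainLow_le_of_le_of_lt hn ha.1 h hb.2⟩
  · exact Or.inr ⟨h, k4ChainLow_le_of_le_of_lt hn hb.1 h ha.2⟩

lemma k4Chain_kDense {n : ℕ} (hn : 4 ≤ n) : kDense (k4Chain n) 4 := by
  refine kDense_of_forall_adj_exists_isNClique fun u v huv => ?_
  rcases (k4Chain_adj.1 huv).2 with ⟨h, hlow⟩ | ⟨h, hlow⟩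
  · have := k4ChainLow_bounds hn v.isLt (by omega)
    exact ⟨_, k4Chain_isNClique_block hn v (by omega), by simp [Fin.le_def]; omega,
      by simp [Fin.le_def]; omega⟩
  · have := k4ChainLow_bounds hn u.isLt (by omega)
    exact ⟨_, k4Chain_isNClique_block hn u (by omega), by simp [Fin.le_def]; omega,
      by simp [Fin.le_def]; omega⟩

lemma k4Chain_not_kDense_five {n : ℕ} (hn : 4 ≤ n) : ¬ kDense (k4Chain n) 5 := by
  intro hD
  have h01 : (k4Chain n).Adj ⟨0, by omega⟩ ⟨1, by omega⟩ := by
    have := k4ChainLow_bounds (v := 1) hn (by omega) (by omega)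
    rw [k4Chain_adj]
    simp only [ne_eq, Fin.mk.injEq]
    omega
  have hsub : (k4Chain n).neighborSet ⟨0, by omega⟩ ∩ (k4Chain n).neighborSet ⟨1, by omega⟩ ⊆
      {⟨2, by omega⟩, ⟨3, by omega⟩} := by
    rintro w ⟨h0, h1⟩
    simp only [mem_neighborSet, k4Chain_adj, ne_eq, Fin.ext_iff] at h0 h1
    have := eq_two_or_eq_three_of_k4ChainLow_eq_zero w.isLt (by omega) (by omega)
    simp only [Set.mem_insert_iff, Set.mem_singleton_iff, Fin.ext_iff]
    omega
  have := (hD _ _ h01).trans (Set.ncard_le_ncard hsub)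
  rw [Set.ncard_pair (by simp)] at this
  omega

lemma ncard_edgeSet_k4Chain {n : ℕ} (hn : 4 ≤ n) :
    (k4Chain n).edgeSet.ncard = if n % 3 = 1 then 2 * n - 2 else 2 * n - 1 :=
  (ncard_edgeSet_fromRel_low_le n (k4ChainLow n)).trans (sum_k4ChainLow hn)

end SimpleGraph

/-- The minimum number of edges of a connected 4*-dense graph on n ≥ 4 vertices is
2n − 2 if n ≡ 1 (mod 3) and 2n − 1 otherwise. -/
theorem min_edges_fourStarDense (n : ℕ) (hn : 4 ≤ n) :
    IsLeast {m : ℕ | ∃ G : SimpleGraph (Fin n),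
        G.Connected ∧ kStarDense G 4 ∧ G.edgeSet.ncard = m}
      (if n % 3 = 1 then 2 * n - 2 else 2 * n - 1) := by
  refine ⟨⟨SimpleGraph.k4Chain n, SimpleGraph.k4Chain_connected hn,
    ⟨SimpleGraph.k4Chain_kDense hn, SimpleGraph.k4Chain_not_kDense_five hn⟩,
    SimpleGraph.ncard_edgeSet_k4Chain hn⟩, ?_⟩
  rintro m ⟨G, hG, ⟨hD, -⟩, rfl⟩
  classical
  obtain ⟨hle, heq⟩ := hG.card_edgeFinset_of_kDense hD
  rw [Fintype.card_fin] at hle heq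
  rw [← SimpleGraph.coe_edgeFinset, Set.ncard_coe_finset]
  split_ifs with h <;> omega
end

section
/- Let 2 ≤ k ≤ n and write n − 1 = (k−1)q + r with 0 ≤ r < k−1. Then there exists a connected k*-dense graph on n vertices with exactly q·C(k,2) + C(r,2) + r(k−r) edges. -/
/-! Write `m = k - 1`, so `n = m q + r + 1`, and cover the vertices `0, …, n - 1` by the `q`
windows `[m i, m i + m]` (`i < q`), consecutive ones sharing an endpoint, and the final window
`[n - 1 - m, n - 1]`, which meets the last of them in `k - r` vertices. Let `G` be the union of
the cliques on these windows. Every edge lies in a window, a `k`-clique, so `G` is `k`-dense;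
vertex `0` has only the `k - 1` neighbours `1, …, m`, so the edge `01` has just `k - 2` common
neighbours. Each vertex `v > 0` is joined exactly to the interval `[windowLow v, v)` below it,
where `windowLow v` is the start of the first window containing `v` other than as its first
vertex; counting every edge at its larger endpoint gives `C(k, 2)` edges per window
`[m i, m i + m]` and `C(r, 2) + r (k - r)` edges at the last `r` vertices. -/

open Finset

theorem kDense_of_forall_adj_exists_isNClique {V : Type*} [Finite V] {G : SimpleGraph V} {k : ℕ}
    (h : ∀ u v, G.Adj u v → ∃ s : Finset V, G.IsNClique k s ∧ u ∈ s ∧ v ∈ s) :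
    kDense G k := by
  intro u v huv
  obtain ⟨s, hs, hu, hv⟩ := h u v huv
  have hsub : (↑s : Set V) \ {u, v} ⊆ G.neighborSet u ∩ G.neighborSet v := by
    rintro w ⟨hw, hwuv⟩
    simp only [Set.mem_insert_iff, Set.mem_singleton_iff, not_or] at hwuv
    exact ⟨hs.isClique hu hw (Ne.symm hwuv.1), hs.isClique hv hw (Ne.symm hwuv.2)⟩
  calc k - 2 = ((↑s : Set V) \ {u, v}).ncard := by
        rw [Set.ncard_sdiff (Set.insert_subset hu (Set.singleton_subset_iff.2 hv)),
          Set.ncard_pair huv.ne, Set.ncard_coe_finset, hs.card_eq]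
    _ ≤ _ := Set.ncard_le_ncard hsub

theorem not_kDense_succ_of_ncard_neighborSet_lt {V : Type*} [Finite V] {G : SimpleGraph V}
    {k : ℕ} {u v : V} (huv : G.Adj u v) (hv : (G.neighborSet v).ncard < k) :
    ¬ kDense G (k + 1) := by
  intro hdense
  have hsub : G.neighborSet u ∩ G.neighborSet v ⊆ G.neighborSet v \ {u} :=
    fun w hw => ⟨hw.2, fun hwu => G.loopless.irrefl u (hwu ▸ hw.1)⟩
  have hcommon := (hdense u v huv).trans (Set.ncard_le_ncard hsub)
  rw [Set.ncard_sdiff_singleton_of_mem (G.mem_neighborSet v u |>.2 huv.symm)] at hcommon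
  have : 0 < (G.neighborSet v).ncard := (Set.ncard_pos (Set.toFinite _)).2 ⟨u, huv.symm⟩
  omega

theorem SimpleGraph.connected_of_forall_exists_lt_adj {V : Type*} [Preorder V] [OrderBot V]
    [WellFoundedLT V] {G : SimpleGraph V} (h : ∀ v, v ≠ ⊥ → ∃ u < v, G.Adj u v) :
    G.Connected := by
  have hreach : ∀ v, G.Reachable ⊥ v := by
    intro v
    induction v using WellFoundedLT.induction with
    | _ v ih =>
      by_cases hv : v = ⊥
      · exact hv ▸ .rfl
      · obtain ⟨u, hu, huv⟩ := h v hv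
        exact (ih u hu).trans huv.reachable
  exact (connected_iff G).2 ⟨fun u v => (hreach u).symm.trans (hreach v), ⟨⊥⟩⟩

theorem SimpleGraph.card_edgeFinset_eq_sum_card_lt_adj {V : Type*} [Fintype V] [LinearOrder V]
    (G : SimpleGraph V) [DecidableRel G.Adj] :
    #G.edgeFinset = ∑ v, #{u | u < v ∧ G.Adj u v} := by
  rw [← card_sigma]
  symm
  refine card_bij (fun p _ => s(p.2, p.1)) ?_ ?_ ?_
  · rintro ⟨v, u⟩ hp
    simp only [mem_sigma, mem_univ, mem_filter, true_and] at hp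
    exact G.mem_edgeFinset.2 hp.2
  · rintro ⟨v, u⟩ hp ⟨v', u'⟩ hp' h
    simp only [mem_sigma, mem_univ, mem_filter, true_and] at hp hp'
    rcases Sym2.eq_iff.1 h with ⟨rfl, rfl⟩ | ⟨rfl, rfl⟩
    · rfl
    · exact absurd (hp.1.trans hp'.1) (lt_irrefl _)
  · intro e he
    induction e using Sym2.ind with
    | h a b =>
      have hab : G.Adj a b := G.mem_edgeFinset.1 he
      rcases hab.ne.lt_or_gt with hlt | hlt
      · exact ⟨⟨b, a⟩, by simpa using ⟨hlt, hab⟩, rfl⟩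
      · exact ⟨⟨a, b⟩, by simpa using ⟨hlt, hab.symm⟩, Sym2.eq_swap⟩

def predIntervalGraph (n : ℕ) (ℓ : ℕ → ℕ) : SimpleGraph (Fin n) :=
  SimpleGraph.fromRel fun u v => u < v ∧ ℓ v ≤ u

namespace predIntervalGraph

variable {n : ℕ} {ℓ : ℕ → ℕ}

theorem adj_of_lt {u v : Fin n} (h : u < v) :
    (predIntervalGraph n ℓ).Adj u v ↔ ℓ v ≤ u := by
  simp only [predIntervalGraph, SimpleGraph.fromRel_adj, h.ne, ne_eq, not_false_eq_true, h,
    true_and, or_iff_left_iff_imp, and_imp]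
  exact fun hvu => absurd (h.trans hvu) (lt_irrefl _)

theorem ncard_edgeSet :
    (predIntervalGraph n ℓ).edgeSet.ncard = ∑ v ∈ range n, (v - ℓ v) := by
  classical
  rw [← SimpleGraph.coe_edgeFinset, Set.ncard_coe_finset,
    SimpleGraph.card_edgeFinset_eq_sum_card_lt_adj, ← Fin.sum_univ_eq_sum_range]
  refine sum_congr rfl fun v _ => ?_
  have hIco : ∀ u ∈ Ico (ℓ v) v, u < n := fun u hu => (mem_Ico.1 hu).2.trans v.isLt
  rw [← Nat.card_Ico, ← card_attachFin _ hIco]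
  congr 1
  ext u
  simp only [mem_filter, mem_univ, true_and, mem_attachFin, mem_Ico]
  constructor
  · rintro ⟨huv, hadj⟩
    exact ⟨(adj_of_lt huv).1 hadj, huv⟩
  · rintro ⟨hle, huv⟩
    exact ⟨huv, (adj_of_lt huv).2 hle⟩

theorem connected (h : ∀ v, 0 < v → v < n + 1 → ℓ v < v) :
    (predIntervalGraph (n + 1) ℓ).Connected := by
  refine SimpleGraph.connected_of_forall_exists_lt_adj fun v hv => ?_
  have hv0 : 0 < (v : ℕ) := Nat.pos_of_ne_zero fun h0 => hv (Fin.ext h0)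
  have hlt := h v hv0 v.isLt
  exact ⟨⟨ℓ v, hlt.trans v.isLt⟩, hlt, (adj_of_lt (u := ⟨ℓ v, _⟩) hlt).2 le_rfl⟩

end predIntervalGraph

theorem sum_range_add_one_eq_choose_two (n : ℕ) :
    ∑ i ∈ range n, (i + 1) = (n + 1).choose 2 := by
  induction n with
  | zero => rfl
  | succ n ih =>
    rw [sum_range_succ, ih, Nat.choose_succ_succ' (n + 1) 1, Nat.choose_one_right, add_comm]

def blockStart (m v : ℕ) : ℕ := m * ((v - 1) / m)

section blockStart

variable {m v : ℕ}

theorem blockStart_lt (hv : 0 < v) : blockStart m v < v :=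
  (Nat.mul_div_le (v - 1) m).trans_lt (Nat.sub_lt hv one_pos)

theorem le_blockStart_add (hm : 0 < m) : v ≤ blockStart m v + m := by
  have := Nat.lt_mul_div_succ (v - 1) hm
  rw [Nat.mul_add, mul_one] at this
  rw [blockStart]
  omega

theorem blockStart_eq {i : ℕ} (hlo : m * i < v) (hhi : v ≤ m * i + m) :
    blockStart m v = m * i := by
  rw [blockStart, Nat.div_eq_of_lt_le (k := i) (by rw [mul_comm]; omega)
    (by rw [add_mul, one_mul, mul_comm]; omega)]

theorem blockStart_add_le {q : ℕ} (hm : 0 < m) (hv : 0 < v) (hvq : v ≤ m * q) :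
    blockStart m v + m ≤ m * q := by
  have hdiv : (v - 1) / m < q := (Nat.div_lt_iff_lt_mul hm).2 (by rw [mul_comm]; omega)
  calc blockStart m v + m = m * ((v - 1) / m + 1) := by rw [blockStart, Nat.mul_add, mul_one]
    _ ≤ m * q := Nat.mul_le_mul_left m hdiv

theorem sum_range_sub_blockStart (q : ℕ) :
    ∑ v ∈ range (m * q + 1), (v - blockStart m v) = q * (m + 1).choose 2 := by
  induction q with
  | zero => simp [blockStart]
  | succ q ih =>
    have hblock : ∀ j ∈ range m, m * q + 1 + j - blockStart m (m * q + 1 + j) = j + 1 := by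
      intro j hj
      rw [blockStart_eq (i := q) (by omega) (by have := mem_range.1 hj; omega)]
      omega
    rw [show m * (q + 1) + 1 = m * q + 1 + m by ring, sum_range_add, ih, sum_congr rfl hblock,
      sum_range_add_one_eq_choose_two]
    ring

end blockStart

def windowLow (m q r v : ℕ) : ℕ := if m * q < v then m * q + r - m else blockStart m v

section windowLow

variable {m q r v : ℕ}

theorem windowLow_lt (hr : r < m) (hv : 0 < v) : windowLow m q r v < v := by
  unfold windowLow
  split_ifs with h
  · omega
  · exact blockStart_lt hv

theorem le_windowLow_add (hm : 0 < m) (hq : 0 < q) (hv : v ≤ m * q + r) :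
    v ≤ windowLow m q r v + m := by
  have := Nat.le_mul_of_pos_right m hq
  unfold windowLow
  split_ifs with h
  · omega
  · exact le_blockStart_add hm

theorem windowLow_add_le (hm : 0 < m) (hq : 0 < q) (hv : 0 < v) (hv' : v ≤ m * q + r) :
    windowLow m q r v + m ≤ m * q + r := by
  have := Nat.le_mul_of_pos_right m hq
  unfold windowLow
  split_ifs with h
  · omega
  · have := blockStart_add_le hm hv (not_lt.1 h)
    omega

theorem windowLow_le_of_mem_window (hm : 0 < m) (hq : 0 < q) (hv : 0 < v) (hv' : v ≤ m * q + r)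
    {y : ℕ} (hy : windowLow m q r v < y) (hy' : y ≤ windowLow m q r v + m) :
    windowLow m q r y ≤ windowLow m q r v := by
  by_cases hvq : m * q < v
  · have hwv : windowLow m q r v = m * q + r - m := if_pos hvq
    have hmq := Nat.le_mul_of_pos_right m hq
    rw [hwv] at hy hy' ⊢
    unfold windowLow
    split_ifs with hyq
    · exact le_rfl
    · have hq1 : m * (q - 1) + m = m * q := by
        rw [Nat.mul_sub_one, Nat.sub_add_cancel hmq]
      rw [blockStart_eq (i := q - 1) (by omega) (by omega)]
      omega
  · have hwv : windowLow m q r v = blockStart m v := if_neg hvq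
    have hb := blockStart_add_le hm hv (not_lt.1 hvq)
    rw [hwv] at hy hy' ⊢
    rw [windowLow, if_neg (by omega)]
    exact (blockStart_eq hy hy').le

theorem sum_range_sub_windowLow (hq : 0 < q) (hr : r < m) :
    ∑ v ∈ range (m * q + r + 1), (v - windowLow m q r v)
      = q * (m + 1).choose 2 + r.choose 2 + r * (m + 1 - r) := by
  have hblocks : ∀ v ∈ range (m * q + 1), v - windowLow m q r v = v - blockStart m v := by
    intro v hv
    rw [windowLow, if_neg (by have := mem_range.1 hv; omega)]
  have hextra : ∀ j ∈ range r,
      m * q + 1 + j - windowLow m q r (m * q + 1 + j) = (m - r) + (j + 1) := by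
    intro j _
    have := Nat.le_mul_of_pos_right m hq
    rw [windowLow, if_pos (by omega)]
    omega
  rw [show m * q + r + 1 = m * q + 1 + r by ring, sum_range_add, sum_congr rfl hblocks,
    sum_range_sub_blockStart, sum_congr rfl hextra, sum_add_distrib,
    sum_range_add_one_eq_choose_two, sum_const, card_range, smul_eq_mul,
    Nat.choose_succ_succ' r 1, Nat.choose_one_right, Nat.sub_add_comm hr.le]
  ring

def windowGraph (m q r : ℕ) : SimpleGraph (Fin (m * q + r + 1)) :=
  predIntervalGraph _ (windowLow m q r)

section windowGraph

variable {m q r : ℕ}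

theorem windowGraph_connected (hr : r < m) : (windowGraph m q r).Connected :=
  predIntervalGraph.connected fun _ hv _ => windowLow_lt hr hv

theorem ncard_edgeSet_windowGraph (hq : 0 < q) (hr : r < m) :
    (windowGraph m q r).edgeSet.ncard
      = q * (m + 1).choose 2 + r.choose 2 + r * (m + 1 - r) := by
  rw [windowGraph, predIntervalGraph.ncard_edgeSet, sum_range_sub_windowLow hq hr]

theorem windowGraph_exists_isNClique (hm : 0 < m) (hq : 0 < q) (v : Fin (m * q + r + 1))
    (hv : 0 < (v : ℕ)) :
    ∃ s : Finset (Fin (m * q + r + 1)), (windowGraph m q r).IsNClique (m + 1) s ∧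
      ∀ u, u ∈ s ↔ windowLow m q r v ≤ u ∧ (u : ℕ) ≤ windowLow m q r v + m := by
  have hv' := Nat.lt_succ_iff.1 v.isLt
  have hwin := windowLow_add_le hm hq hv hv'
  have hIcc : ∀ x ∈ Icc (windowLow m q r v) (windowLow m q r v + m), x < m * q + r + 1 :=
    fun x hx => by have := (mem_Icc.1 hx).2; omega
  have hadj : ∀ x y : Fin (m * q + r + 1), x < y → windowLow m q r v ≤ x →
      (y : ℕ) ≤ windowLow m q r v + m → (windowGraph m q r).Adj x y := fun x y hxy hx hy =>
    (predIntervalGraph.adj_of_lt hxy).2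
      ((windowLow_le_of_mem_window hm hq hv hv' (hx.trans_lt hxy) hy).trans hx)
  refine ⟨(Icc _ _).attachFin hIcc, ⟨fun x hx y hy hxy => ?_, ?_⟩, fun u => by
    rw [mem_attachFin, mem_Icc]⟩
  · simp only [coe_attachFin, Set.mem_preimage, mem_coe, mem_Icc] at hx hy
    rcases hxy.lt_or_gt with hlt | hlt
    · exact hadj x y hlt hx.1 hy.2
    · exact (hadj y x hlt hy.1 hx.2).symm
  · rw [card_attachFin, Nat.card_Icc]
    omega

theorem windowGraph_kDense (hm : 0 < m) (hq : 0 < q) (hr : r < m) :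
    kDense (windowGraph m q r) (m + 1) := by
  refine kDense_of_forall_adj_exists_isNClique fun u v huv => ?_
  suffices hlt : ∀ u v, u < v → (windowGraph m q r).Adj u v →
      ∃ s, (windowGraph m q r).IsNClique (m + 1) s ∧ u ∈ s ∧ v ∈ s by
    rcases huv.ne.lt_or_gt with h | h
    · exact hlt u v h huv
    · obtain ⟨s, hs, hv, hu⟩ := hlt v u h huv.symm
      exact ⟨s, hs, hu, hv⟩
  intro u v huv hadj
  have hlow := (predIntervalGraph.adj_of_lt huv).1 hadj
  have hv : 0 < (v : ℕ) := (Nat.zero_le u).trans_lt huv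
  have hvwin := le_windowLow_add (r := r) hm hq (Nat.lt_succ_iff.1 v.isLt)
  obtain ⟨s, hs, hmem⟩ := windowGraph_exists_isNClique hm hq v hv
  exact ⟨s, hs, (hmem u).2 ⟨hlow, by omega⟩,
    (hmem v).2 ⟨(windowLow_lt hr hv).le, hvwin⟩⟩

theorem windowGraph_not_kDense (hm : 0 < m) (hq : 0 < q) (hr : r < m) :
    ¬ kDense (windowGraph m q r) (m + 2) := by
  have hmq := Nat.le_mul_of_pos_right m hq
  let one : Fin (m * q + r + 1) := ⟨1, by omega⟩
  have hlow_one : windowLow m q r 1 = 0 := Nat.lt_one_iff.1 (windowLow_lt hr one_pos)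
  have hadj : (windowGraph m q r).Adj one 0 :=
    ((predIntervalGraph.adj_of_lt (show (0 : Fin _) < one from Nat.one_pos)).2 hlow_one.le).symm
  obtain ⟨s, hs, hmem⟩ := windowGraph_exists_isNClique hm hq one one_pos
  have hsub : (windowGraph m q r).neighborSet 0 ⊆ ↑(s.erase 0) := by
    intro x hx
    have hx0 : (0 : Fin _) < x :=
      pos_iff_ne_zero.2 (((windowGraph m q r).mem_neighborSet _ _).1 hx).ne.symm
    have hlow := (predIntervalGraph.adj_of_lt hx0).1 hx
    have hxwin := le_windowLow_add (r := r) hm hq (Nat.lt_succ_iff.1 x.isLt)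
    rw [coe_erase, Set.mem_sdiff, mem_coe, hmem, hlow_one]
    rw [Fin.val_zero] at hlow
    exact ⟨⟨Nat.zero_le _, by omega⟩, hx0.ne'⟩
  refine not_kDense_succ_of_ncard_neighborSet_lt hadj ((Set.ncard_le_ncard hsub).trans_lt ?_)
  rw [Set.ncard_coe_finset, card_erase_of_mem ((hmem 0).2 ⟨hlow_one.le, Nat.zero_le _⟩),
    hs.card_eq]
  omega

end windowGraph

theorem exists_connected_kStarDense_with_edges_general (k n q r : ℕ) (hkn : k ≤ n)
    (hqr : n - 1 = (k - 1) * q + r) (hr : r < k - 1) :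
    ∃ G : SimpleGraph (Fin n), G.Connected ∧ kStarDense G k ∧
      G.edgeSet.ncard = q * Nat.choose k 2 + Nat.choose r 2 + r * (k - r) := by
  obtain ⟨m, rfl⟩ : ∃ m, k = m + 1 := ⟨k - 1, by omega⟩
  simp only [Nat.add_sub_cancel] at hqr hr
  obtain rfl : n = m * q + r + 1 := by omega
  have hm : 0 < m := by omega
  have hq : 0 < q := Nat.pos_of_ne_zero fun hq0 => by simp [hq0] at hkn; omega
  exact ⟨windowGraph m q r, windowGraph_connected hr,
    ⟨windowGraph_kDense hm hq hr, windowGraph_not_kDense hm hq hr⟩,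
    ncard_edgeSet_windowGraph hq hr⟩

/-- For 2 ≤ k ≤ n with n − 1 = (k−1)q + r, 0 ≤ r < k−1, there is a connected
k*-dense graph on n vertices with q·C(k,2) + C(r,2) + r(k−r) edges. -/
theorem exists_connected_kStarDense_with_edges (k n q r : ℕ) (hk : 2 ≤ k) (hkn : k ≤ n)
    (hqr : n - 1 = (k - 1) * q + r) (hr : r < k - 1) :
    ∃ G : SimpleGraph (Fin n), G.Connected ∧ kStarDense G k ∧
      G.edgeSet.ncard = q * Nat.choose k 2 + Nat.choose r 2 + r * (k - r) :=
  exists_connected_kStarDense_with_edges_general k n q r hkn hqr hr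
end windowLow
end

section
/- For integers 2 ≤ k ≤ n, any graph G on n vertices with at least n + k − 2 + C(n−2, 2) edges is (k+1)-dense. Consequently, every k*-dense graph on n vertices has at most n + k − 3 + C(n−2, 2) edges. -/
/-!
For an edge `uv`, inclusion–exclusion splits the edges into the `deg u + deg v - 1` edges meeting
`{u, v}` and those avoiding it, of which there are at most `C(n-2, 2)`. Hence many edges force
`deg u + deg v ≥ n + k - 1`, and since `N(u) ∪ N(v)` has at most `n` vertices, `u` and `v` have
at least `k - 1` common neighbours.
-/

open Finset

namespace SimpleGraph

variable {V : Type*} [Fintype V] [DecidableEq V] {G : SimpleGraph V} [DecidableRel G.Adj] {u v : V}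

theorem Adj.card_edgeFinset_add_one (huv : G.Adj u v) :
    #G.edgeFinset + 1 = G.degree u + G.degree v + #{e ∈ G.edgeFinset | u ∉ e ∧ v ∉ e} := by
  have hmeet :
      {e ∈ G.edgeFinset | u ∈ e ∨ v ∈ e} = G.incidenceFinset u ∪ G.incidenceFinset v := by
    rw [incidenceFinset_eq_filter, incidenceFinset_eq_filter, filter_or]
  have hboth : G.incidenceFinset u ∩ G.incidenceFinset v = {s(u, v)} := by
    rw [← coe_inj, coe_inter, coe_incidenceFinset, coe_incidenceFinset, coe_singleton,
      incidenceSet_inter_incidenceSet_of_adj _ huv]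
  have hsplit := card_filter_add_card_filter_not (s := G.edgeFinset) (fun e => u ∈ e ∨ v ∈ e)
  have hunion := card_union_add_card_inter (G.incidenceFinset u) (G.incidenceFinset v)
  simp only [not_or, hmeet] at hsplit
  rw [hboth, card_incidenceFinset_eq_degree, card_incidenceFinset_eq_degree,
    card_singleton] at hunion
  omega

theorem card_edgeFinset_avoiding_le (huv : u ≠ v) :
    #{e ∈ G.edgeFinset | u ∉ e ∧ v ∉ e} ≤ (Fintype.card V - 2).choose 2 := by
  -- In the complete graph the identity `Adj.card_edgeFinset_add_one` counts the avoiding edges.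
  have hmono : #{e ∈ G.edgeFinset | u ∉ e ∧ v ∉ e} ≤
      #{e ∈ (⊤ : SimpleGraph V).edgeFinset | u ∉ e ∧ v ∉ e} :=
    card_le_card (filter_subset_filter _ (edgeFinset_mono le_top))
  have htop := ((top_adj u v).2 huv).card_edgeFinset_add_one
  rw [card_edgeFinset_top_eq_card_choose_two, IsRegularOfDegree.top.degree_eq,
    IsRegularOfDegree.top.degree_eq] at htop
  obtain ⟨m, hm⟩ : ∃ m, Fintype.card V = m + 2 := by
    have htwo := card_le_univ {u, v}
    rw [card_pair huv] at htwo
    exact ⟨_, (Nat.sub_add_cancel htwo).symm⟩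
  have hchoose : (m + 2).choose 2 = m.choose 2 + 2 * m + 1 := by
    simp only [Nat.choose_succ_succ', Nat.choose_zero_right, zero_add, Nat.choose_one_right,
      Nat.reduceAdd]
    ring
  rw [hm, hchoose] at htop
  rw [hm, Nat.add_sub_cancel]
  omega

theorem degree_add_degree_le (u v : V) :
    G.degree u + G.degree v ≤ Fintype.card V + (G.neighborSet u ∩ G.neighborSet v).ncard := by
  rw [← card_neighborFinset_eq_degree, ← card_neighborFinset_eq_degree,
    ← card_union_add_card_inter, ← Set.ncard_coe_finset (_ ∩ _), coe_inter, coe_neighborFinset, coe_neighborFinset]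
  gcongr
  exact card_le_univ _

theorem kDense_add_one_of_le_card_edgeFinset {k : ℕ}
    (hE : Fintype.card V + k - 2 + (Fintype.card V - 2).choose 2 ≤ #G.edgeFinset) :
    kDense G (k + 1) := by
  intro u v huv
  have hsplit := huv.card_edgeFinset_add_one
  have havoid := card_edgeFinset_avoiding_le (G := G) huv.ne
  have hcommon := degree_add_degree_le (G := G) u v
  omega

end SimpleGraph

theorem edges_upper_bound_general (k n : ℕ) :
    (∀ G : SimpleGraph (Fin n),
      n + k - 2 + Nat.choose (n - 2) 2 ≤ G.edgeSet.ncard → kDense G (k + 1)) ∧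
    (∀ G : SimpleGraph (Fin n), kStarDense G k →
      G.edgeSet.ncard ≤ n + k - 3 + Nat.choose (n - 2) 2) := by
  classical
  have hdense (G : SimpleGraph (Fin n))
      (hE : n + k - 2 + Nat.choose (n - 2) 2 ≤ G.edgeSet.ncard) : kDense G (k + 1) := by
    rw [← SimpleGraph.coe_edgeFinset, Set.ncard_coe_finset] at hE
    exact SimpleGraph.kDense_add_one_of_le_card_edgeFinset (by simpa using hE)
  refine ⟨hdense, fun G hG => ?_⟩
  by_contra! hE
  exact hG.2 (hdense G (by omega))

/-- Any graph on n vertices with at least n + k − 2 + C(n−2,2) edges is (k+1)-dense;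
consequently every k*-dense graph on n vertices has at most n + k − 3 + C(n−2,2) edges. -/
theorem edges_upper_bound (k n : ℕ) (hk : 2 ≤ k) (hkn : k ≤ n) :
    (∀ G : SimpleGraph (Fin n),
      n + k - 2 + Nat.choose (n - 2) 2 ≤ G.edgeSet.ncard → kDense G (k + 1)) ∧
    (∀ G : SimpleGraph (Fin n), kStarDense G k →
      G.edgeSet.ncard ≤ n + k - 3 + Nat.choose (n - 2) 2) :=
  edges_upper_bound_general k n
end

section
/- For integers 2 ≤ k ≤ n with n ≥ k+2, the maximum number of edges in a connected k*-dense graph on n vertices is exactly n + k − 3 + C(n−2, 2); this is achieved by the graph obtained from K_{n−2} plus two adjacent vertices u, v where u and v are each joined to a set B of k−2 common vertices of the K_{n−2}, and u, v are additionally joined to disjoint sets A, C partitioning the remaining n−k vertices with |A| = ⌊(n−k)/2⌋ and |C| = ⌈(n−k)/2⌉. -/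
/-!
A graph on `n` vertices that is not `(k+1)`-dense has an edge `uv` with at most `k - 2` common
neighbours. The edges at `u` or `v` number `deg u + deg v - 1 = |N u ∪ N v| + |N u ∩ N v| - 1
≤ n + k - 3`, and all other edges lie among the remaining `n - 2` vertices, so there are at most
`C(n-2, 2)` of them. The bound is attained by `K_{n-1}` together with one more vertex joined to
`k - 1` of its vertices: its only edges with few common neighbours are those at the new vertex,
and they have exactly `k - 2`.
-/

open Finset

namespace SimpleGraph

section Counting

variable {V : Type*} [Fintype V] [DecidableEq V] (G : SimpleGraph V) [DecidableRel G.Adj]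

theorem edgeFinset_subset_biUnion_incidenceFinset_union_image_offDiag (t : Finset V) :
    G.edgeFinset ⊆
      t.biUnion (fun x => G.incidenceFinset x) ∪ tᶜ.offDiag.image Sym2.mk.uncurry := by
  intro e he
  induction e using Sym2.ind with
  | h a b =>
    have hab : G.Adj a b := by simpa using he
    by_cases hat : a ∈ t
    · exact mem_union_left _ (mem_biUnion.2 ⟨a, hat, by simp [incidenceSet, hab]⟩)
    by_cases hbt : b ∈ t
    · exact mem_union_left _ (mem_biUnion.2 ⟨b, hbt, by simp [incidenceSet, hab]⟩)
    exact mem_union_right _ (mem_image.2 ⟨(a, b), by simp [hat, hbt, hab.ne], rfl⟩)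

theorem card_edgeFinset_le_card_biUnion_incidenceFinset_add (t : Finset V) :
    #G.edgeFinset ≤
      #(t.biUnion (fun x => G.incidenceFinset x)) + (Fintype.card V - #t).choose 2 :=
  calc #G.edgeFinset
      ≤ #(t.biUnion (fun x => G.incidenceFinset x) ∪ tᶜ.offDiag.image Sym2.mk.uncurry) :=
        card_le_card (G.edgeFinset_subset_biUnion_incidenceFinset_union_image_offDiag t)
    _ ≤ #(t.biUnion (fun x => G.incidenceFinset x)) + #(tᶜ.offDiag.image Sym2.mk.uncurry) :=
        card_union_le _ _
    _ = #(t.biUnion (fun x => G.incidenceFinset x)) + (Fintype.card V - #t).choose 2 := by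
        rw [Sym2.card_image_offDiag, card_compl]

theorem ncard_commonNeighbors_eq_card_inter (u v : V) :
    (G.commonNeighbors u v).ncard = #(G.neighborFinset u ∩ G.neighborFinset v) := by
  rw [← Set.ncard_coe_finset, coe_inter, coe_neighborFinset, coe_neighborFinset,
    commonNeighbors_eq]

theorem card_incidenceFinset_union_add_one_le {u v : V} (huv : G.Adj u v) :
    #(G.incidenceFinset u ∪ G.incidenceFinset v) + 1 ≤
      Fintype.card V + (G.commonNeighbors u v).ncard := by
  have hedge : s(u, v) ∈ G.incidenceFinset u ∩ G.incidenceFinset v := by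
    simp [incidenceSet, huv]
  have hinc := card_union_add_card_inter (G.incidenceFinset u) (G.incidenceFinset v)
  have hnbr := card_union_add_card_inter (G.neighborFinset u) (G.neighborFinset v)
  rw [card_incidenceFinset_eq_degree, card_incidenceFinset_eq_degree] at hinc
  rw [card_neighborFinset_eq_degree, card_neighborFinset_eq_degree] at hnbr
  have := card_pos.2 ⟨_, hedge⟩
  have := card_le_univ (G.neighborFinset u ∪ G.neighborFinset v)
  rw [ncard_commonNeighbors_eq_card_inter]
  omega

theorem card_edgeFinset_add_one_le_of_adj {u v : V} (huv : G.Adj u v) :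
    #G.edgeFinset + 1 ≤
      Fintype.card V + (G.commonNeighbors u v).ncard + (Fintype.card V - 2).choose 2 := by
  have := G.card_edgeFinset_le_card_biUnion_incidenceFinset_add {u, v}
  rw [biUnion_insert, singleton_biUnion, card_pair huv.ne] at this
  have := G.card_incidenceFinset_union_add_one_le huv
  omega

theorem card_edgeFinset_eq_of_induce_compl_singleton_eq_top {w : V}
    (h : G.induce {w}ᶜ = ⊤) :
    #G.edgeFinset = (Fintype.card V - 1).choose 2 + G.degree w := by
  have hdel := G.card_edgeFinset_deleteIncidenceSet w
  have htop : #(G.induce {w}ᶜ).edgeFinset = (Fintype.card V - 1).choose 2 := by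
    rw [← Set.card_singleton w, ← Fintype.card_compl_set,
      ← card_edgeFinset_top_eq_card_choose_two]
    congr!
  have := G.card_incidenceFinset_eq_degree w ▸ card_le_card (G.incidenceFinset_subset w)
  rw [← card_edgeFinset_induce_compl_singleton, htop] at hdel
  omega

end Counting

section CliqueJoin

variable {V : Type*} {w : V} {A : Finset V}

def cliqueJoin (w : V) (A : Finset V) : SimpleGraph V where
  Adj x y := x ≠ y ∧ (x = w → y ∈ A) ∧ (y = w → x ∈ A)
  symm := ⟨fun _ _ ⟨hne, hx, hy⟩ => ⟨hne.symm, hy, hx⟩⟩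
  loopless := ⟨fun _ h => h.1 rfl⟩

@[simp]
theorem cliqueJoin_adj {x y : V} :
    (cliqueJoin w A).Adj x y ↔ x ≠ y ∧ (x = w → y ∈ A) ∧ (y = w → x ∈ A) :=
  Iff.rfl

instance [DecidableEq V] : DecidableRel (cliqueJoin w A).Adj :=
  fun _ _ => decidable_of_iff' _ cliqueJoin_adj

theorem cliqueJoin_adj_of_mem (hw : w ∉ A) {a : V} (ha : a ∈ A) {x : V} (hxa : x ≠ a) :
    (cliqueJoin w A).Adj x a :=
  ⟨hxa, fun _ => ha, fun hx => absurd (hx ▸ ha) hw⟩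

theorem cliqueJoin_connected (hw : w ∉ A) (hA : A.Nonempty) : (cliqueJoin w A).Connected := by
  obtain ⟨a, ha⟩ := hA
  refine (connected_iff_exists_forall_reachable _).2 ⟨a, fun x => ?_⟩
  rcases eq_or_ne x a with rfl | hxa
  · rfl
  · exact (cliqueJoin_adj_of_mem hw ha hxa).reachable.symm

theorem cliqueJoin_commonNeighbors_of_mem [DecidableEq V] (hw : w ∉ A) {a : V} (ha : a ∈ A) :
    (cliqueJoin w A).commonNeighbors w a = ↑(A.erase a) := by
  ext x
  have haw : a ≠ w := ne_of_mem_of_not_mem ha hw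
  by_cases hxw : x = w
  · subst hxw
    simp [mem_commonNeighbors, hw]
  · simp [mem_commonNeighbors, hxw, Ne.symm hxw, haw, eq_comm, and_comm]

theorem cliqueJoin_not_kDense [DecidableEq V] (hw : w ∉ A) (hA : A.Nonempty) :
    ¬ kDense (cliqueJoin w A) (#A + 2) := by
  obtain ⟨a, ha⟩ := hA
  intro hdense
  have := hdense w a (cliqueJoin_adj_of_mem hw ha (ne_of_mem_of_not_mem ha hw).symm)
  rw [← commonNeighbors_eq, cliqueJoin_commonNeighbors_of_mem hw ha, Set.ncard_coe_finset,
    card_erase_of_mem ha] at this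
  have := card_pos.2 ⟨a, ha⟩
  omega

variable [Fintype V] [DecidableEq V]

theorem compl_subset_cliqueJoin_commonNeighbors {x y : V} (hx : x ≠ w) (hy : y ≠ w) :
    (↑({x, y, w}ᶜ : Finset V) : Set V) ⊆ (cliqueJoin w A).commonNeighbors x y := by
  intro z hz
  simp only [coe_compl, coe_insert, coe_singleton, Set.mem_compl_iff, Set.mem_insert_iff,
    Set.mem_singleton_iff, not_or] at hz
  simp [mem_commonNeighbors, hx, hy, hz.2.2, Ne.symm hz.1, Ne.symm hz.2.1]

theorem cliqueJoin_kDense (hw : w ∉ A) (hcard : #A + 2 ≤ Fintype.card V) :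
    kDense (cliqueJoin w A) (#A + 1) := by
  intro x y hxy
  rw [← commonNeighbors_eq]
  by_cases hx : x = w
  · subst hx
    rw [cliqueJoin_commonNeighbors_of_mem hw (hxy.2.1 rfl), Set.ncard_coe_finset,
      card_erase_of_mem (hxy.2.1 rfl)]
    omega
  by_cases hy : y = w
  · subst hy
    rw [commonNeighbors_symm, cliqueJoin_commonNeighbors_of_mem hw (hxy.2.2 rfl),
      Set.ncard_coe_finset, card_erase_of_mem (hxy.2.2 rfl)]
    omega
  calc #A + 1 - 2 ≤ #({x, y, w}ᶜ : Finset V) := by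
        rw [card_compl]
        have := card_le_three (a := x) (b := y) (c := w)
        omega
    _ ≤ ((cliqueJoin w A).commonNeighbors x y).ncard := by
        rw [← Set.ncard_coe_finset]
        exact Set.ncard_le_ncard (compl_subset_cliqueJoin_commonNeighbors hx hy)

theorem card_edgeFinset_cliqueJoin (hw : w ∉ A) :
    #(cliqueJoin w A).edgeFinset = (Fintype.card V - 1).choose 2 + #A := by
  have hinduce : (cliqueJoin w A).induce {w}ᶜ = ⊤ := by
    ext ⟨x, hx⟩ ⟨y, hy⟩
    rw [Set.mem_compl_singleton_iff] at hx hy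
    simp [Subtype.ext_iff, hx, hy]
  have hdeg : (cliqueJoin w A).degree w = #A := by
    rw [← card_neighborFinset_eq_degree]
    congr 1
    ext a
    rw [mem_neighborFinset]
    exact ⟨fun h => h.2.1 rfl,
      fun ha => cliqueJoin_adj_of_mem hw ha (ne_of_mem_of_not_mem ha hw).symm⟩
  rw [card_edgeFinset_eq_of_induce_compl_singleton_eq_top _ hinduce, hdeg]

end CliqueJoin

end SimpleGraph

open SimpleGraph

theorem ncard_edgeSet_le_of_not_kDense {V : Type*} [Fintype V] {G : SimpleGraph V} {k : ℕ}
    (hG : ¬ kDense G (k + 1)) :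
    G.edgeSet.ncard ≤ Fintype.card V + k - 3 + (Fintype.card V - 2).choose 2 := by
  classical
  obtain ⟨u, v, huv, hsparse⟩ :
      ∃ u v, G.Adj u v ∧ (G.commonNeighbors u v).ncard + 1 < k := by
    simpa [kDense, commonNeighbors_eq] using hG
  have := G.card_edgeFinset_add_one_le_of_adj huv
  rw [← coe_edgeFinset, Set.ncard_coe_finset]
  omega

theorem exists_connected_kStarDense_ncard_edgeSet_eq {V : Type*} [Fintype V] {k : ℕ}
    (hk : 2 ≤ k) (hV : k + 1 ≤ Fintype.card V) :
    ∃ G : SimpleGraph V, G.Connected ∧ kStarDense G k ∧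
      G.edgeSet.ncard = (Fintype.card V - 1).choose 2 + (k - 1) := by
  classical
  obtain ⟨w⟩ : Nonempty V := Fintype.card_pos_iff.1 (by omega)
  obtain ⟨A, hAw, hAcard⟩ := exists_subset_card_eq (s := univ.erase w) (n := k - 1)
    (by rw [card_erase_of_mem (mem_univ w), card_univ]; omega)
  have hw : w ∉ A := fun h => notMem_erase w univ (hAw h)
  have hA : A.Nonempty := card_pos.1 (by omega)
  obtain rfl : k = #A + 1 := by omega
  refine ⟨cliqueJoin w A, cliqueJoin_connected hw hA,
    ⟨cliqueJoin_kDense hw (by omega), cliqueJoin_not_kDense hw hA⟩, ?_⟩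
  rw [← coe_edgeFinset, Set.ncard_coe_finset, card_edgeFinset_cliqueJoin hw,
    Nat.add_sub_cancel]

/-- For 2 ≤ k and n ≥ k + 2, the maximum number of edges of a connected k*-dense
graph on n vertices is exactly n + k − 3 + C(n−2,2). -/
theorem max_edges_kStarDense (k n : ℕ) (hk : 2 ≤ k) (hn : k + 2 ≤ n) :
    IsGreatest {m : ℕ | ∃ G : SimpleGraph (Fin n),
        G.Connected ∧ kStarDense G k ∧ G.edgeSet.ncard = m}
      (n + k - 3 + Nat.choose (n - 2) 2) := by
  refine ⟨?_, ?_⟩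
  · obtain ⟨G, hconn, hdense, hedges⟩ :=
      exists_connected_kStarDense_ncard_edgeSet_eq (V := Fin n) hk (by simp; omega)
    refine ⟨G, hconn, hdense, ?_⟩
    obtain ⟨m, rfl⟩ : ∃ m, n = m + 2 := ⟨n - 2, by omega⟩
    have hchoose : (m + 1).choose 2 = m + m.choose 2 := by
      simpa using Nat.choose_succ_succ' m 1
    rw [hedges, Fintype.card_fin, show m + 2 - 1 = m + 1 by omega, Nat.add_sub_cancel, hchoose]
    omega
  · rintro m ⟨G, -, ⟨-, hG⟩, rfl⟩
    simpa using ncard_edgeSet_le_of_not_kDense hG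
end

section
/- For every integer n ≥ 4 and every integer a with n−1 ≤ a ≤ C(n−2,2) + n − 1, there exists a connected 2*-dense graph on n vertices with exactly a edges. -/
lemma Nat.succ_choose_two (k : ℕ) : (k + 1).choose 2 = k + k.choose 2 := by
  rw [Nat.choose_succ_succ', Nat.choose_one_right]

lemma kDense_two {V : Type*} (G : SimpleGraph V) : kDense G 2 :=
  fun _ _ _ => Nat.zero_le _

lemma kStarDense_two_of_adj_of_neighborSet_subset {V : Type*} {G : SimpleGraph V} {u v : V}
    (huv : G.Adj u v) (hu : G.neighborSet u ⊆ {v}) : kStarDense G 2 := by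
  refine ⟨kDense_two G, fun h => ?_⟩
  have hempty : G.neighborSet u ∩ G.neighborSet v = ∅ := by
    refine Set.eq_empty_of_forall_notMem fun w ⟨hwu, hwv⟩ => ?_
    obtain rfl : w = v := hu hwu
    exact G.irrefl hwv
  simpa [hempty] using h u v huv

namespace SimpleGraph

variable {V : Type*}

lemma exists_le_le_ncard_edgeSet_eq [Finite V] {G H : SimpleGraph V} (hGH : G ≤ H) {a : ℕ}
    (hGa : G.edgeSet.ncard ≤ a) (haH : a ≤ H.edgeSet.ncard) :
    ∃ K : SimpleGraph V, G ≤ K ∧ K ≤ H ∧ K.edgeSet.ncard = a := by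
  obtain ⟨S, hGS, hSH, rfl⟩ := Set.exists_subsuperset_card_eq (edgeSet_mono hGH) hGa haH
  have hS : (fromEdgeSet S).edgeSet = S := by
    rw [edgeSet_fromEdgeSet, sdiff_eq_left, ← Set.subset_compl_iff_disjoint_right]
    exact hSH.trans H.edgeSet_subset_compl_diagSet
  refine ⟨fromEdgeSet S, ?_, ?_, by rw [hS]⟩
  · rwa [← edgeSet_subset_edgeSet, hS]
  · rwa [← edgeSet_subset_edgeSet, hS]

lemma ncard_edgeSet_starGraph [Fintype V] (r : V) :
    (starGraph r).edgeSet.ncard = Fintype.card V - 1 := by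
  classical
  rw [← (isTree_starGraph r).card_edgeFinset, ← coe_edgeFinset, Set.ncard_coe_finset]
  rfl

def completeWithPendant (u v : V) : SimpleGraph V :=
  (⊤ : SimpleGraph V).deleteIncidenceSet u ⊔ edge u v

section completeWithPendant

variable {u v : V}

lemma neighborSet_completeWithPendant_subset :
    (completeWithPendant u v).neighborSet u ⊆ {v} := by
  intro w hw
  simp only [completeWithPendant, mem_neighborSet, sup_adj, deleteIncidenceSet_adj,
    edge_adj] at hw
  grind

lemma starGraph_le_completeWithPendant (huv : u ≠ v) :
    starGraph v ≤ completeWithPendant u v := by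
  intro x y hxy
  simp only [starGraph_adj] at hxy
  simp only [completeWithPendant, sup_adj, deleteIncidenceSet_adj, edge_adj, top_adj]
  grind

lemma ncard_edgeSet_completeWithPendant [Fintype V] (huv : u ≠ v) :
    (completeWithPendant u v).edgeSet.ncard = (Fintype.card V - 1).choose 2 + 1 := by
  classical
  have hfresh : s(u, v) ∉ ((⊤ : SimpleGraph V).deleteIncidenceSet u).edgeSet := by
    simp [deleteIncidenceSet_adj]
  rw [completeWithPendant, edgeSet_sup, edgeSet_edge_of_ne huv, Set.union_singleton,
    Set.ncard_insert_of_notMem hfresh, ← coe_edgeFinset, Set.ncard_coe_finset,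
    card_edgeFinset_deleteIncidenceSet, card_edgeFinset_top_eq_card_choose_two,
    complete_graph_degree]
  rcases Fintype.card V with _ | k
  · rfl
  · rw [Nat.add_sub_cancel, Nat.succ_choose_two]
    omega

end completeWithPendant

end SimpleGraph

open SimpleGraph in
/-- For n ≥ 4 and any a with n − 1 ≤ a ≤ C(n−2,2) + n − 1, there is a connected
2*-dense graph on n vertices with exactly a edges. -/
theorem realization_twoStarDense (n a : ℕ) (hn : 4 ≤ n)
    (ha₁ : n - 1 ≤ a) (ha₂ : a ≤ Nat.choose (n - 2) 2 + n - 1) :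
    ∃ G : SimpleGraph (Fin n), G.Connected ∧ kStarDense G 2 ∧ G.edgeSet.ncard = a := by
  have h01 : (⟨0, by omega⟩ : Fin n) ≠ ⟨1, by omega⟩ := by simp
  have hmax : (n - 1).choose 2 + 1 = (n - 2).choose 2 + n - 1 := by
    rw [show n - 1 = n - 2 + 1 by omega, Nat.succ_choose_two]
    omega
  obtain ⟨G, hstar, hmaximal, hcard⟩ := exists_le_le_ncard_edgeSet_eq (a := a)
    (starGraph_le_completeWithPendant h01)
    (by rwa [ncard_edgeSet_starGraph, Fintype.card_fin])
    (by rwa [ncard_edgeSet_completeWithPendant h01, Fintype.card_fin, hmax])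
  refine ⟨G, (connected_starGraph _).mono hstar, ?_, hcard⟩
  exact kStarDense_two_of_adj_of_neighborSet_subset (hstar (starGraph_center_adj' h01.symm))
    ((neighborSet_mono hmaximal _).trans neighborSet_completeWithPendant_subset)
end
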